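/- arXiv:0910.5714 — 7 statements merged into one kernel-verified Lean document; each statement's English description precedes it below -/
import Mathlib

section
/- Every Mil_k-monochromatic tiling of V contains at least 2^k tiles on which Mil_k takes the value 1 and at least 2^k − 1 tiles on which Mil_k takes the value 2. -/
open Finset

/-- The value space `{0,…,2^k−1} × {0,…,2^k−1}`. -/
def Vk (k : ℕ) : Finset (ℕ × ℕ) := Finset.range (2 ^ k) ×ˢ Finset.range (2 ^ k)

/-- A tiling of `Vk k`: a finite collection of nonempty rectangles partitioning `Vk k`. -/
def IsTiling (k : ℕ) (T : Finset (Finset (ℕ × ℕ))) : Prop :=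
  (∀ R ∈ T, ∃ S S' : Finset ℕ, R = S ×ˢ S') ∧
    (∀ R ∈ T, R.Nonempty) ∧ (∀ R ∈ T, R ⊆ Vk k) ∧ ∀ x ∈ Vk k, ∃! R, R ∈ T ∧ x ∈ R

/-- `f`-monochromaticity of a tiling. -/
def Mono {β : Type} (f : ℕ × ℕ → β) (T : Finset (Finset (ℕ × ℕ))) : Prop :=
  ∀ R ∈ T, ∀ x ∈ R, ∀ y ∈ R, f x = f y

/-- The tile of `T` containing `x` (union of all tiles containing `x`; for a
tiling this is exactly the unique tile containing `x`). -/
def tileOf (T : Finset (Finset (ℕ × ℕ))) (x : ℕ × ℕ) : Finset (ℕ × ℕ) :=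
  (T.filter fun R => x ∈ R).sup id

/-- The ideal region of `x`: the level set of `f x` inside `Vk k`. -/
def ideal {β : Type} [DecidableEq β] (k : ℕ) (f : ℕ × ℕ → β) (x : ℕ × ℕ) : Finset (ℕ × ℕ) :=
  (Vk k).filter fun y => f y = f x

/-- Average-case objective PAR of a tiling w.r.t. the uniform distribution. -/
def avgObjPAR {β : Type} [DecidableEq β] (k : ℕ) (f : ℕ × ℕ → β)
    (T : Finset (Finset (ℕ × ℕ))) : ℚ :=
  (∑ x ∈ Vk k, ((ideal k f x).card : ℚ) / ((tileOf T x).card : ℚ)) / 2 ^ (2 * k)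

/-- Average-case PAR with respect to party 1. -/
def avgPAR1 {β : Type} [DecidableEq β] (k : ℕ) (f : ℕ × ℕ → β)
    (T : Finset (Finset (ℕ × ℕ))) : ℚ :=
  (∑ x ∈ Vk k,
      (((Finset.range (2 ^ k)).filter fun y => f (x.1, y) = f x).card : ℚ) /
        (((Finset.range (2 ^ k)).filter fun y => (x.1, y) ∈ tileOf T x).card : ℚ)) /
    2 ^ (2 * k)

/-- Average-case PAR with respect to party 2. -/
def avgPAR2 {β : Type} [DecidableEq β] (k : ℕ) (f : ℕ × ℕ → β)
    (T : Finset (Finset (ℕ × ℕ))) : ℚ :=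
  (∑ x ∈ Vk k,
      (((Finset.range (2 ^ k)).filter fun y => f (y, x.2) = f x).card : ℚ) /
        (((Finset.range (2 ^ k)).filter fun y => (y, x.2) ∈ tileOf T x).card : ℚ)) /
    2 ^ (2 * k)

/-- The millionaires function: `1` if `x1 ≥ x2`, else `2`. -/
def Mil (x : ℕ × ℕ) : ℕ := if x.2 ≤ x.1 then 1 else 2

/-- The second-price auction function. -/
def Auc (x : ℕ × ℕ) : ℕ × ℕ := if x.2 ≤ x.1 then (1, x.2) else (2, x.1)

/-- Translate a tile by `(a, a)`. -/
def shiftTile (a : ℕ) (R : Finset (ℕ × ℕ)) : Finset (ℕ × ℕ) :=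
  R.image fun p => (p.1 + a, p.2 + a)

/-- The bisection-protocol tiling `B_k`. -/
def Btile : ℕ → Finset (Finset (ℕ × ℕ))
  | 0 => {{(0, 0)}}
  | j + 1 =>
    Btile j ∪ (Btile j).image (shiftTile (2 ^ j)) ∪
      {Finset.range (2 ^ j) ×ˢ Finset.Ico (2 ^ j) (2 ^ (j + 1)),
        Finset.Ico (2 ^ j) (2 ^ (j + 1)) ×ˢ Finset.range (2 ^ j)}

/-- The bounded-bisection-auction tiling `T_{c,i}`. -/
def BBA : ℕ → ℕ → Finset (Finset (ℕ × ℕ))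
  | 0, i =>
    (Finset.range (2 ^ i)).image (fun p => Finset.Ico p (2 ^ i) ×ˢ ({p} : Finset ℕ)) ∪
      (Finset.range (2 ^ i - 1)).image fun p => ({p} : Finset ℕ) ×ˢ Finset.Ico (p + 1) (2 ^ i)
  | c + 1, i =>
    BBA c i ∪ (BBA c i).image (shiftTile (2 ^ (c + i))) ∪
      (Finset.range (2 ^ (c + i))).image
        (fun j => Finset.Ico (2 ^ (c + i)) (2 ^ (c + i + 1)) ×ˢ ({j} : Finset ℕ)) ∪
      (Finset.range (2 ^ (c + i))).image fun j =>
        ({j} : Finset ℕ) ×ˢ Finset.Ico (2 ^ (c + i)) (2 ^ (c + i + 1))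

/-- The public-good function: `true` iff `x1 + x2 ≥ 2^k − 1` ("Build"). -/
def PG (k : ℕ) (x : ℕ × ℕ) : Bool := decide (2 ^ k - 1 ≤ x.1 + x.2)

/-- The truthful public-good function: `none` = "Do Not Build". -/
def TPG (c : ℕ) (x : ℕ × ℕ) : Option (ℕ × ℕ) :=
  if x.1 + x.2 < c then none else some (c - x.2, c - x.1)

/-- The tiling of `Vk k` into singleton cells (sealed-bid auction). -/
def sealedTiling (k : ℕ) : Finset (Finset (ℕ × ℕ)) :=
  (Vk k).image fun x => ({x} : Finset (ℕ × ℕ))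

/-- Every `Mil`-monochromatic tiling of `V` contains at least `2^k`
tiles on which `Mil` takes the value `1` and at least `2^k − 1` tiles on which
`Mil` takes the value `2`. -/
theorem stmt1 (k : ℕ) (hk : 1 ≤ k) (T : Finset (Finset (ℕ × ℕ)))
    (hT : IsTiling k T) (hM : Mono Mil T) :
    2 ^ k ≤ (T.filter fun R => ∀ x ∈ R, Mil x = 1).card ∧
      2 ^ k - 1 ≤ (T.filter fun R => ∀ x ∈ R, Mil x = 2).card := by
  classical
  obtain ⟨hrect, hne, hsub, hcover⟩ := hT
  have key : ∀ p ∈ Vk k, ∃ R, R ∈ T ∧ p ∈ R := by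
    intro p hp
    obtain ⟨R, hR, _⟩ := hcover p hp
    exact ⟨R, hR.1, hR.2⟩
  have hpow : 1 ≤ 2 ^ k := Nat.one_le_two_pow
  constructor
  · -- diagonal points (i, i)
    have h1 : ∀ i : ℕ, ∃ R, i < 2 ^ k → R ∈ T ∧ (i, i) ∈ R := by
      intro i
      by_cases h : i < 2 ^ k
      · obtain ⟨R, hRT, hm⟩ := key (i, i) (by simp [Vk, h])
        exact ⟨R, fun _ => ⟨hRT, hm⟩⟩
      · exact ⟨∅, fun h' => absurd h' h⟩
    choose R1 hR1 using h1
    have inj : ∀ i j, i < 2 ^ k → j < 2 ^ k → i < j → R1 i ≠ R1 j := by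
      intro i j hi hj hij heq
      obtain ⟨hiT, hii⟩ := hR1 i hi
      obtain ⟨hjT, hjj⟩ := hR1 j hj
      rw [← heq] at hjj
      obtain ⟨S, S', hSS⟩ := hrect (R1 i) hiT
      have hij' : (i, j) ∈ R1 i := by
        rw [hSS] at hii hjj ⊢
        simp only [Finset.mem_product] at hii hjj ⊢
        exact ⟨hii.1, hjj.2⟩
      have := hM (R1 i) hiT (i, i) hii (i, j) hij'
      simp [Mil, Nat.not_le.mpr hij] at this
    have maps : ∀ i ∈ Finset.range (2 ^ k),
        R1 i ∈ T.filter fun R => ∀ x ∈ R, Mil x = 1 := by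
      intro i hi
      rw [Finset.mem_range] at hi
      obtain ⟨hiT, hii⟩ := hR1 i hi
      refine Finset.mem_filter.mpr ⟨hiT, fun x hx => ?_⟩
      have := hM (R1 i) hiT x hx (i, i) hii
      simpa [Mil] using this
    have injOn : Set.InjOn R1 (Finset.range (2 ^ k)) := by
      intro i hi j hj heq
      simp only [Finset.coe_range, Set.mem_Iio] at hi hj
      by_contra h
      rcases Nat.lt_or_ge i j with h' | h'
      · exact inj i j hi hj h' heq
      · exact inj j i hj hi (lt_of_le_of_ne h' (Ne.symm h)) heq.symm
    calc 2 ^ k = (Finset.range (2 ^ k)).card := (Finset.card_range _).symm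
      _ ≤ _ := Finset.card_le_card_of_injOn R1 maps injOn
  · -- points (i, i+1)
    have h2 : ∀ i : ℕ, ∃ R, i < 2 ^ k - 1 → R ∈ T ∧ (i, i + 1) ∈ R := by
      intro i
      by_cases h : i < 2 ^ k - 1
      · obtain ⟨R, hRT, hm⟩ := key (i, i + 1) (by simp [Vk]; omega)
        exact ⟨R, fun _ => ⟨hRT, hm⟩⟩
      · exact ⟨∅, fun h' => absurd h' h⟩
    choose R2 hR2 using h2
    have inj : ∀ i j, i < 2 ^ k - 1 → j < 2 ^ k - 1 → i < j → R2 i ≠ R2 j := by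
      intro i j hi hj hij heq
      obtain ⟨hiT, hii⟩ := hR2 i hi
      obtain ⟨hjT, hjj⟩ := hR2 j hj
      rw [← heq] at hjj
      obtain ⟨S, S', hSS⟩ := hrect (R2 i) hiT
      have hij' : (j, i + 1) ∈ R2 i := by
        rw [hSS] at hii hjj ⊢
        simp only [Finset.mem_product] at hii hjj ⊢
        exact ⟨hjj.1, hii.2⟩
      have := hM (R2 i) hiT (i, i + 1) hii (j, i + 1) hij'
      simp only [Mil] at this; split_ifs at this <;> omega
    have maps : ∀ i ∈ Finset.range (2 ^ k - 1),
        R2 i ∈ T.filter fun R => ∀ x ∈ R, Mil x = 2 := by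
      intro i hi
      rw [Finset.mem_range] at hi
      obtain ⟨hiT, hii⟩ := hR2 i hi
      refine Finset.mem_filter.mpr ⟨hiT, fun x hx => ?_⟩
      have := hM (R2 i) hiT x hx (i, i + 1) hii
      simpa [Mil] using this
    have injOn : Set.InjOn R2 (Finset.range (2 ^ k - 1)) := by
      intro i hi j hj heq
      simp only [Finset.coe_range, Set.mem_Iio] at hi hj
      by_contra h
      rcases Nat.lt_or_ge i j with h' | h'
      · exact inj i j hi hj h' heq
      · exact inj j i hj hi (lt_of_le_of_ne h' (Ne.symm h)) heq.symm
    calc 2 ^ k - 1 = (Finset.range (2 ^ k - 1)).card := (Finset.card_range _).symm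
      _ ≤ _ := Finset.card_le_card_of_injOn R2 maps injOn
end

section
/- Every Mil_k-monochromatic tiling of V has average-case objective PAR at least 2^k − 1/2 + 2^{−(k+1)}. -/
open Finset

lemma mil_eq_one_iff (y : ℕ × ℕ) : Mil y = 1 ↔ y.2 ≤ y.1 := by
  unfold Mil; split <;> simp_all

lemma mil_eq_two {y : ℕ × ℕ} (h : ¬ Mil y = 1) : Mil y = 2 := by
  unfold Mil at *; split at h <;> simp_all

lemma card_mil1 (k : ℕ) :
    ((Vk k).filter fun y => Mil y = 1).card * 2 = 2 ^ k * (2 ^ k + 1) := by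
  have h : ((Vk k).filter fun y => Mil y = 1).card = ∑ a ∈ Finset.range (2 ^ k), (a + 1) := by
    rw [Finset.card_filter, Vk, Finset.sum_product]
    refine Finset.sum_congr rfl fun a ha => ?_
    rw [← Finset.card_filter]
    have : (Finset.range (2 ^ k)).filter (fun b => Mil (a, b) = 1) = Finset.range (a + 1) := by
      ext b
      simp only [Finset.mem_filter, Finset.mem_range, mil_eq_one_iff]
      have := Finset.mem_range.mp ha
      omega
    rw [this, Finset.card_range]
  have h2 : ∑ a ∈ Finset.range (2 ^ k), (a + 1) = ∑ i ∈ Finset.range (2 ^ k + 1), i := by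
    rw [Finset.sum_range_succ']
    simp
  rw [h, h2, Finset.sum_range_id_mul_two]
  simp [Nat.mul_comm]

lemma card_mil_split (k : ℕ) :
    ((Vk k).filter fun y => Mil y = 1).card
      + ((Vk k).filter fun y => Mil y = 2).card = 2 ^ k * 2 ^ k := by
  have he : (Vk k).filter (fun y => Mil y = 2) = (Vk k).filter (fun y => ¬ Mil y = 1) := by
    apply Finset.filter_congr
    intro y _
    constructor
    · intro h h1; rw [h1] at h; exact absurd h (by norm_num)
    · exact mil_eq_two
  rw [he, Finset.card_filter_add_card_filter_not, Vk, Finset.card_product,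
    Finset.card_range]

lemma tileOf_eq {k : ℕ} {T : Finset (Finset (ℕ × ℕ))} (hT : IsTiling k T)
    {R : Finset (ℕ × ℕ)} {x : ℕ × ℕ} (hR : R ∈ T) (hx : x ∈ R) : tileOf T x = R := by
  have hxV : x ∈ Vk k := hT.2.2.1 R hR hx
  obtain ⟨R', hR', hu⟩ := hT.2.2.2 x hxV
  have hfilter : T.filter (fun S => x ∈ S) = {R} := by
    apply Finset.eq_singleton_iff_unique_mem.mpr
    refine ⟨Finset.mem_filter.mpr ⟨hR, hx⟩, fun S hS => ?_⟩
    have hS' := Finset.mem_filter.mp hS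
    rw [hu S ⟨hS'.1, hS'.2⟩, ← hu R ⟨hR, hx⟩]
  rw [tileOf, hfilter, Finset.sup_singleton, id]

lemma tiling_sum {k : ℕ} {T : Finset (Finset (ℕ × ℕ))} (hT : IsTiling k T)
    (g : ℕ × ℕ → ℚ) : ∑ x ∈ Vk k, g x = ∑ R ∈ T, ∑ x ∈ R, g x := by
  have hVU : Vk k = T.biUnion id := by
    ext x
    simp only [Finset.mem_biUnion, id]
    constructor
    · intro hx; obtain ⟨R, hR, _⟩ := hT.2.2.2 x hx; exact ⟨R, hR.1, hR.2⟩
    · rintro ⟨R, hR, hx⟩; exact hT.2.2.1 R hR hx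
  have hd : (T : Set (Finset (ℕ × ℕ))).PairwiseDisjoint id := by
    intro A hA B hB hAB
    simp only [Finset.mem_coe] at hA hB
    refine Finset.disjoint_left.mpr fun x hxA hxB => hAB ?_
    obtain ⟨R, _, hu⟩ := hT.2.2.2 x (hT.2.2.1 A hA hxA)
    rw [hu A ⟨hA, hxA⟩, hu B ⟨hB, hxB⟩]
  rw [hVU, Finset.sum_biUnion hd]
  rfl


lemma mem_Vk {k : ℕ} {x : ℕ × ℕ} : x ∈ Vk k ↔ x.1 < 2 ^ k ∧ x.2 < 2 ^ k := by
  cases x; simp [Vk, Finset.mem_product]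

/-- Every `Mil`-monochromatic tiling of `V` has average-case
objective PAR at least `2^k − 1/2 + 2^{−(k+1)}`. -/
theorem stmt2 (k : ℕ) (hk : 1 ≤ k) (T : Finset (Finset (ℕ × ℕ)))
    (hT : IsTiling k T) (hM : Mono Mil T) :
    (2 ^ k : ℚ) - 1 / 2 + 1 / 2 ^ (k + 1) ≤ avgObjPAR k Mil T := by
  classical
  obtain ⟨hrect, hne, hsub, hu⟩ := hT
  set c1 : ℕ := ((Vk k).filter fun y => Mil y = 1).card with hc1
  set c2 : ℕ := ((Vk k).filter fun y => Mil y = 2).card with hc2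
  set T1 := T.filter (fun R => ∀ x ∈ R, Mil x = 1) with hT1
  set T2 := T.filter (fun R => ¬ ∀ x ∈ R, Mil x = 1) with hT2
  -- every tile in T2 is all-2
  have hT2all : ∀ R ∈ T2, ∀ x ∈ R, Mil x = 2 := by
    intro R hR x hx
    rw [hT2, Finset.mem_filter] at hR
    obtain ⟨hRT, hnot⟩ := hR
    push_neg at hnot
    obtain ⟨y, hy, hy1⟩ := hnot
    rw [hM R hRT x hx y hy]
    exact mil_eq_two hy1
  -- sum computation
  have hsum : ∑ x ∈ Vk k, ((ideal k Mil x).card : ℚ) / ((tileOf T x).card : ℚ)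
      = (T1.card : ℚ) * c1 + (T2.card : ℚ) * c2 := by
    rw [tiling_sum ⟨hrect, hne, hsub, hu⟩]
    rw [← Finset.sum_filter_add_sum_filter_not T (fun R => ∀ x ∈ R, Mil x = 1)]
    congr 1
    · rw [Finset.sum_congr rfl (g := fun _ => (c1 : ℚ)) ?_, Finset.sum_const, nsmul_eq_mul]
      intro R hR
      have hRT : R ∈ T := (Finset.mem_filter.mp hR).1
      have hall := (Finset.mem_filter.mp hR).2
      have hcard : ((R.card : ℚ)) ≠ 0 := by
        exact_mod_cast Finset.card_ne_zero.mpr (hne R hRT)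
      have : ∀ x ∈ R, ((ideal k Mil x).card : ℚ) / ((tileOf T x).card : ℚ)
          = (c1 : ℚ) / (R.card : ℚ) := by
        intro x hx
        rw [tileOf_eq ⟨hrect, hne, hsub, hu⟩ hRT hx]
        congr 3
        rw [ideal, hall x hx]
      rw [Finset.sum_congr rfl this, Finset.sum_const, nsmul_eq_mul]
      field_simp
    · rw [Finset.sum_congr rfl (g := fun _ => (c2 : ℚ)) ?_, Finset.sum_const, nsmul_eq_mul]
      intro R hR
      have hRT : R ∈ T := (Finset.mem_filter.mp hR).1
      have hall := hT2all R hR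
      have hcard : ((R.card : ℚ)) ≠ 0 := by
        exact_mod_cast Finset.card_ne_zero.mpr (hne R hRT)
      have : ∀ x ∈ R, ((ideal k Mil x).card : ℚ) / ((tileOf T x).card : ℚ)
          = (c2 : ℚ) / (R.card : ℚ) := by
        intro x hx
        rw [tileOf_eq ⟨hrect, hne, hsub, hu⟩ hRT hx]
        congr 3
        rw [ideal, hall x hx]
      rw [Finset.sum_congr rfl this, Finset.sum_const, nsmul_eq_mul]
      field_simp
  -- lower bound on T1.card
  have h1 : 2 ^ k ≤ T1.card := by
    have hmem : ∀ i, i < 2 ^ k → (i, i) ∈ Vk k := fun i hi => mem_Vk.mpr ⟨hi, hi⟩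
    have := Finset.card_le_card_of_injOn (fun i => tileOf T (i, i)) (s := Finset.range (2 ^ k))
      (t := T1) ?_ ?_
    · simpa using this
    · intro i hi
      obtain ⟨R, ⟨hRT, hxR⟩, -⟩ := hu (i, i) (hmem i (Finset.mem_range.mp hi))
      show tileOf T (i, i) ∈ T1
      rw [tileOf_eq ⟨hrect, hne, hsub, hu⟩ hRT hxR]
      refine Finset.mem_filter.mpr ⟨hRT, fun x hx => ?_⟩
      rw [hM R hRT x hx (i, i) hxR, mil_eq_one_iff]
    · have key : ∀ i j : ℕ, i < 2 ^ k → j < 2 ^ k → i < j →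
          tileOf T (i, i) = tileOf T (j, j) → False := by
        intro i j hi hj hij heq
        obtain ⟨R, ⟨hRT, hiR⟩, -⟩ := hu (i, i) (hmem i hi)
        have hti := tileOf_eq ⟨hrect, hne, hsub, hu⟩ hRT hiR
        obtain ⟨R', ⟨hRT', hjR'⟩, -⟩ := hu (j, j) (hmem j hj)
        have htj := tileOf_eq ⟨hrect, hne, hsub, hu⟩ hRT' hjR'
        have hRR : R = R' := by rw [← hti, ← htj, heq]
        have hjR : (j, j) ∈ R := hRR ▸ hjR'
        obtain ⟨S, S', hSS⟩ := hrect R hRT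
        rw [hSS, Finset.mem_product] at hiR hjR
        have hij' : (i, j) ∈ R := by rw [hSS, Finset.mem_product]; exact ⟨hiR.1, hjR.2⟩
        have this := hM R hRT (i, j) hij' (i, i) (by rw [hSS, Finset.mem_product]; exact hiR)
        have hone : Mil (i, i) = 1 := by rw [mil_eq_one_iff]
        rw [hone, mil_eq_one_iff] at this
        simp at this
        omega
      intro i hi j hj heq
      simp only [Finset.coe_range, Set.mem_Iio] at hi hj
      by_contra hne'
      rcases Nat.lt_or_ge i j with h | h
      · exact key i j hi hj h heq
      · exact key j i hj hi (by omega) heq.symm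
  -- lower bound on T2.card
  have h2 : 2 ^ k - 1 ≤ T2.card := by
    have h2k : 1 ≤ 2 ^ k := Nat.one_le_two_pow
    have hmem : ∀ i, i < 2 ^ k - 1 → (i, i + 1) ∈ Vk k := fun i hi =>
      mem_Vk.mpr ⟨by omega, by omega⟩
    have hmil2 : ∀ i : ℕ, Mil (i, i + 1) = 2 := fun i => mil_eq_two (by
      rw [mil_eq_one_iff]; omega)
    have := Finset.card_le_card_of_injOn (fun i => tileOf T (i, i + 1))
      (s := Finset.range (2 ^ k - 1)) (t := T2) ?_ ?_
    · simpa using this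
    · intro i hi
      obtain ⟨R, ⟨hRT, hxR⟩, -⟩ := hu (i, i + 1) (hmem i (Finset.mem_range.mp hi))
      show tileOf T (i, i + 1) ∈ T2
      rw [tileOf_eq ⟨hrect, hne, hsub, hu⟩ hRT hxR]
      refine Finset.mem_filter.mpr ⟨hRT, fun hall => ?_⟩
      have := hall (i, i + 1) hxR
      rw [hmil2 i] at this
      norm_num at this
    · have key : ∀ i j : ℕ, i < 2 ^ k - 1 → j < 2 ^ k - 1 → i < j →
          tileOf T (i, i + 1) = tileOf T (j, j + 1) → False := by
        intro i j hi hj hij heq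
        obtain ⟨R, ⟨hRT, hiR⟩, -⟩ := hu (i, i + 1) (hmem i hi)
        have hti := tileOf_eq ⟨hrect, hne, hsub, hu⟩ hRT hiR
        obtain ⟨R', ⟨hRT', hjR'⟩, -⟩ := hu (j, j + 1) (hmem j hj)
        have htj := tileOf_eq ⟨hrect, hne, hsub, hu⟩ hRT' hjR'
        have hRR : R = R' := by rw [← hti, ← htj, heq]
        have hjR : (j, j + 1) ∈ R := hRR ▸ hjR'
        obtain ⟨S, S', hSS⟩ := hrect R hRT
        rw [hSS, Finset.mem_product] at hiR hjR
        have hcross : (j, i + 1) ∈ R := by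
          rw [hSS, Finset.mem_product]; exact ⟨hjR.1, hiR.2⟩
        have h2' : Mil (j, i + 1) = 2 := by
          rw [hM R hRT (j, i + 1) hcross (i, i + 1) (by rw [hSS, Finset.mem_product]; exact hiR)]
          exact hmil2 i
        have : ¬ Mil (j, i + 1) = 1 := by rw [h2']; norm_num
        rw [mil_eq_one_iff] at this
        simp at this
        omega
      intro i hi j hj heq
      simp only [Finset.coe_range, Set.mem_Iio] at hi hj
      by_contra hne'
      rcases Nat.lt_or_ge i j with h | h
      · exact key i j hi hj h heq
      · exact key j i hj hi (by omega) heq.symm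
  -- final arithmetic
  have h2k : 1 ≤ 2 ^ k := Nat.one_le_two_pow
  rw [avgObjPAR, hsum]
  have hc1q : (c1 : ℚ) * 2 = 2 ^ k * (2 ^ k + 1) := by exact_mod_cast (card_mil1 k)
  have hsplit : (c1 : ℚ) + c2 = 2 ^ k * 2 ^ k := by exact_mod_cast (card_mil_split k)
  have ht1 : (2 ^ k : ℚ) ≤ T1.card := by exact_mod_cast h1
  have ht2 : (2 ^ k : ℚ) - 1 ≤ T2.card := by
    have : ((2 ^ k - 1 : ℕ) : ℚ) ≤ T2.card := by exact_mod_cast h2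
    rwa [Nat.cast_sub h2k, Nat.cast_pow, Nat.cast_ofNat, Nat.cast_one] at this
  have hnpos : (0 : ℚ) < 2 ^ k := by positivity
  rw [le_div_iff₀ (by positivity : (0 : ℚ) < (2 : ℚ) ^ (2 * k))]
  have e1 : ((2 : ℚ) ^ (2 * k)) = 2 ^ k * 2 ^ k := by rw [two_mul, pow_add]
  have e2 : ((2 : ℚ) ^ (k + 1)) = 2 ^ k * 2 := by rw [pow_succ]
  rw [e1, e2]
  have hc1v : (c1 : ℚ) = 2 ^ k * (2 ^ k + 1) / 2 := by linarith
  have hc2v : (c2 : ℚ) = 2 ^ k * (2 ^ k - 1) / 2 := by linarith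
  have key : ((2 : ℚ) ^ k - 1 / 2 + 1 / (2 ^ k * 2)) * (2 ^ k * 2 ^ k)
      = 2 ^ k * c1 + (2 ^ k - 1) * c2 := by
    rw [hc1v, hc2v]
    field_simp
    ring
  have hA : (2 ^ k : ℚ) * c1 ≤ (T1.card : ℚ) * c1 :=
    mul_le_mul_of_nonneg_right ht1 (by positivity)
  have hB : ((2 ^ k : ℚ) - 1) * c2 ≤ (T2.card : ℚ) * c2 := by
    apply mul_le_mul_of_nonneg_right ht2
    rw [hc2v]
    have : (1 : ℚ) ≤ 2 ^ k := by exact_mod_cast Nat.one_le_two_pow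
    have h0 : (0:ℚ) ≤ 2 ^ k * (2 ^ k - 1) := by nlinarith
    positivity
  linarith
end

section
/- The bisection-protocol tiling B_k is a Mil_k-monochromatic tiling of V containing exactly 2^{k+1} − 1 tiles on which Mil_k takes the value 1 and exactly 2^k − 1 tiles on which Mil_k takes the value 2, and its average-case objective PAR equals 3·2^{k−1} − 1/2. -/
/-!
`B_{j+1}` consists of two translates of `B_j` on the diagonal quadrants of `V_{j+1}` and the two
off-diagonal quadrants, on which `Mil` is constantly `2` (where `x1 < x2`) and `1` (where
`x1 > x2`). So `B_k` is a partition of `V` into `Mil`-monochromatic rectangles, and the numbers of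
tiles of each colour satisfy `c (j + 1) = 2 c j + 1`. In a monochromatic tiling a tile `R` of
colour `v` contributes `|R| · |f⁻¹ v| / |R| = |f⁻¹ v|` to `∑ |R^I| / |R^T|`; with `N = 2^k` the
level sets of `Mil` have sizes `N (N + 1) / 2` and `N (N - 1) / 2`, so the sum is
`(2N - 1) N (N + 1) / 2 + (N - 1) N (N - 1) / 2 = N (3N - 1) / 2`, and `PAR = 3N / 2 - 1 / 2`.
-/

open Finset

namespace Finpartition

variable {α β : Type*} [DecidableEq α] [DecidableEq β] {s t : Finset α}

theorem disjoint_parts (P : Finpartition s) (Q : Finpartition t) (h : Disjoint s t) :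
    Disjoint P.parts Q.parts :=
  Finset.disjoint_left.mpr fun _ hP hQ =>
    P.ne_empty hP (Finset.disjoint_self_iff_empty _ |>.mp (h.mono (P.subset hP) (Q.subset hQ)))

def disjUnion (P : Finpartition s) (Q : Finpartition t) (h : Disjoint s t) :
    Finpartition (s ∪ t) where
  parts := P.parts ∪ Q.parts
  supIndep := by
    rw [Finset.supIndep_iff_pairwiseDisjoint, Finset.coe_union, Set.pairwiseDisjoint_union]
    exact ⟨P.disjoint, Q.disjoint, fun _ hR _ hS _ => h.mono (P.subset hR) (Q.subset hS)⟩
  sup_parts := by rw [Finset.sup_union, P.sup_parts, Q.sup_parts]; rfl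
  bot_notMem := by simp

def image (P : Finpartition s) {f : α → β} (hf : Function.Injective f) :
    Finpartition (s.image f) where
  parts := P.parts.image (Finset.image f)
  supIndep := by
    rw [Finset.supIndep_iff_pairwiseDisjoint, Finset.coe_image,
      (Finset.image_injective hf).injOn.pairwiseDisjoint_image]
    exact fun _ hR _ hS hRS => (Finset.disjoint_image hf).mpr (P.disjoint hR hS hRS)
  sup_parts := by
    rw [Finset.sup_image]
    have := congrArg (Finset.image f) P.biUnion_parts
    rwa [Finset.biUnion_image, ← Finset.sup_eq_biUnion] at this
  bot_notMem := by simp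

theorem card_filter_parts_disjUnion (P : Finpartition s) (Q : Finpartition t) (h : Disjoint s t)
    (p : Finset α → Prop) [DecidablePred p] :
    #((P.disjUnion Q h).parts.filter p) = #(P.parts.filter p) + #(Q.parts.filter p) :=
  (Finset.filter_union p P.parts Q.parts).symm ▸
    Finset.card_union_of_disjoint (Finset.disjoint_filter_filter (P.disjoint_parts Q h))

theorem card_filter_parts_image (P : Finpartition s) {f : α → β} (hf : Function.Injective f)
    (p : Finset β → Prop) [DecidablePred p] :
    #((P.image hf).parts.filter p) = #(P.parts.filter fun R => p (R.image f)) := by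
  rw [image, Finset.filter_image, Finset.card_image_of_injective _ (Finset.image_injective hf)]

theorem sum_parts {M : Type*} [AddCommMonoid M] (P : Finpartition s) (g : α → M) :
    ∑ x ∈ s, g x = ∑ R ∈ P.parts, ∑ x ∈ R, g x := by
  conv_lhs => rw [← P.biUnion_parts]
  exact Finset.sum_biUnion P.disjoint

theorem tileOf_eq_of_mem {s : Finset (ℕ × ℕ)} (P : Finpartition s) {R : Finset (ℕ × ℕ)}
    (hR : R ∈ P.parts) {x : ℕ × ℕ} (hx : x ∈ R) : tileOf P.parts x = R := by
  have : P.parts.filter (x ∈ ·) = {R} :=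
    Finset.eq_singleton_iff_unique_mem.mpr
      ⟨Finset.mem_filter.mpr ⟨hR, hx⟩, fun S hS =>
        (Finset.mem_filter.mp hS).elim fun hS hxS => P.eq_of_mem_parts hS hR hxS hx⟩
  rw [tileOf, this, Finset.sup_singleton, id]

theorem isTiling {k : ℕ} (P : Finpartition (Vk k))
    (hrect : ∀ R ∈ P.parts, ∃ S S' : Finset ℕ, R = S ×ˢ S') : IsTiling k P.parts :=
  ⟨hrect, fun _ => P.nonempty_of_mem_parts, fun _ => P.subset, fun _ => P.existsUnique_mem⟩

theorem sum_card_ideal_div_card_tileOf_of_mem {β : Type} [DecidableEq β] {k : ℕ}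
    (f : ℕ × ℕ → β) (P : Finpartition (Vk k)) {R : Finset (ℕ × ℕ)} (hR : R ∈ P.parts) {v : β}
    (hv : ∀ x ∈ R, f x = v) :
    ∑ x ∈ R, (#(ideal k f x) : ℚ) / #(tileOf P.parts x) = #((Vk k).filter fun y => f y = v) := by
  have hR0 : (#R : ℚ) ≠ 0 := by exact_mod_cast (P.nonempty_of_mem_parts hR).card_pos.ne'
  rw [Finset.sum_congr rfl fun x hx => by rw [P.tileOf_eq_of_mem hR hx, ideal, hv x hx],
    Finset.sum_const, nsmul_eq_mul]
  field_simp

end Finpartition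

theorem Mil_eq_one_iff (x : ℕ × ℕ) : Mil x = 1 ↔ x.2 ≤ x.1 := by
  unfold Mil; split <;> simp_all

theorem Mil_eq_two_iff_ne_one (x : ℕ × ℕ) : Mil x = 2 ↔ Mil x ≠ 1 := by
  unfold Mil; split <;> simp

theorem Finpartition.sum_card_ideal_Mil_div_card_tileOf {k : ℕ} (P : Finpartition (Vk k))
    (hP : Mono Mil P.parts) :
    ∑ x ∈ Vk k, (#(ideal k Mil x) : ℚ) / #(tileOf P.parts x) =
      #(P.parts.filter fun R => ∀ x ∈ R, Mil x = 1) * #((Vk k).filter fun y => Mil y = 1) +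
        #(P.parts.filter fun R => ∀ x ∈ R, Mil x = 2) * #((Vk k).filter fun y => Mil y = 2) := by
  have hcolor : P.parts.filter (fun R => ¬ ∀ x ∈ R, Mil x = 1) =
      P.parts.filter (fun R => ∀ x ∈ R, Mil x = 2) := by
    refine filter_congr fun R hR => ?_
    obtain ⟨x₀, hx₀⟩ := P.nonempty_of_mem_parts hR
    have hconst (v : ℕ) : (∀ x ∈ R, Mil x = v) ↔ Mil x₀ = v :=
      ⟨fun h => h x₀ hx₀, fun h x hx => (hP R hR x hx x₀ hx₀).trans h⟩
    rw [hconst, hconst, Mil_eq_two_iff_ne_one]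
  rw [P.sum_parts, ← sum_filter_add_sum_filter_not _ (fun R => ∀ x ∈ R, Mil x = 1), hcolor]
  simp only [sum_congr rfl fun R hR => P.sum_card_ideal_div_card_tileOf_of_mem Mil
    (mem_filter.mp hR).1 (mem_filter.mp hR).2, sum_const, nsmul_eq_mul]

theorem card_filter_snd_le_fst_mul_two (n : ℕ) :
    #((range n ×ˢ range n).filter fun y => y.2 ≤ y.1) * 2 = (n + 1) * n := by
  have hfiber : ∀ a ∈ range n, #((range n).filter (· ≤ a)) = a + 1 := fun a ha => by
    rw [← card_range (a + 1)]
    congr 1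
    ext b
    simp only [mem_filter, mem_range] at ha ⊢
    omega
  rw [card_filter, sum_product]
  simp only [← card_filter]
  rw [sum_congr rfl hfiber, ← add_zero (∑ i ∈ _, (i + 1)), ← sum_range_succ' (fun i => i),
    sum_range_id_mul_two, Nat.add_sub_cancel]

theorem card_filter_Vk_Mil_one (k : ℕ) :
    (#((Vk k).filter fun y => Mil y = 1) : ℚ) = 2 ^ k * (2 ^ k + 1) / 2 := by
  simp only [Mil_eq_one_iff]
  have := card_filter_snd_le_fst_mul_two (2 ^ k)
  rw [← Vk] at this
  rw [eq_div_iff two_ne_zero]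
  exact_mod_cast this.trans (mul_comm _ _)

theorem card_filter_Vk_Mil_two (k : ℕ) :
    (#((Vk k).filter fun y => Mil y = 2) : ℚ) = 2 ^ k * (2 ^ k - 1) / 2 := by
  have hsplit : #((Vk k).filter fun y => Mil y = 1) + #((Vk k).filter fun y => Mil y = 2) =
      2 ^ k * 2 ^ k := by
    simp only [Mil_eq_two_iff_ne_one]
    rw [card_filter_add_card_filter_not, Vk, card_product, card_range]
  have : (#((Vk k).filter fun y => Mil y = 1) : ℚ) + #((Vk k).filter fun y => Mil y = 2) =
      2 ^ k * 2 ^ k := by exact_mod_cast hsplit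
  linarith [card_filter_Vk_Mil_one k]

def diagShift (a : ℕ) : ℕ × ℕ → ℕ × ℕ := Prod.map (· + a) (· + a)

theorem shiftTile_eq_image_diagShift (a : ℕ) : shiftTile a = Finset.image (diagShift a) := rfl

theorem diagShift_injective (a : ℕ) : Function.Injective (diagShift a) :=
  (add_left_injective a).prodMap (add_left_injective a)

theorem Mil_diagShift (a : ℕ) (x : ℕ × ℕ) : Mil (diagShift a x) = Mil x := by
  simp only [diagShift, Prod.map, Mil, add_le_add_iff_right]

theorem shiftTile_product (a : ℕ) (S S' : Finset ℕ) :
    shiftTile a (S ×ˢ S') = S.image (· + a) ×ˢ S'.image (· + a) :=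
  prodMap_image_product (· + a) (· + a) S S'

def blockLT (j : ℕ) : Finset (ℕ × ℕ) := range (2 ^ j) ×ˢ Ico (2 ^ j) (2 ^ (j + 1))

def blockGT (j : ℕ) : Finset (ℕ × ℕ) := Ico (2 ^ j) (2 ^ (j + 1)) ×ˢ range (2 ^ j)

theorem Btile_succ (j : ℕ) :
    Btile (j + 1) = Btile j ∪ (Btile j).image (shiftTile (2 ^ j)) ∪ {blockLT j, blockGT j} :=
  rfl

theorem zero_two_pow_mem_blockLT (j : ℕ) : (0, 2 ^ j) ∈ blockLT j := by
  simp [blockLT, pow_succ]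

theorem two_pow_zero_mem_blockGT (j : ℕ) : (2 ^ j, 0) ∈ blockGT j := by
  simp [blockGT, pow_succ]

theorem Mil_of_mem_blockLT {j : ℕ} {x : ℕ × ℕ} (hx : x ∈ blockLT j) : Mil x = 2 := by
  simp only [blockLT, mem_product, mem_range, mem_Ico] at hx
  rw [Mil_eq_two_iff_ne_one, Ne, Mil_eq_one_iff]
  omega

theorem Mil_of_mem_blockGT {j : ℕ} {x : ℕ × ℕ} (hx : x ∈ blockGT j) : Mil x = 1 := by
  simp only [blockGT, mem_product, mem_range, mem_Ico] at hx
  rw [Mil_eq_one_iff]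
  omega

theorem image_diagShift_Vk (j : ℕ) :
    (Vk j).image (diagShift (2 ^ j)) = Ico (2 ^ j) (2 ^ (j + 1)) ×ˢ Ico (2 ^ j) (2 ^ (j + 1)) := by
  rw [diagShift, Vk, prodMap_image_product, range_eq_Ico, image_add_right_Ico, zero_add, pow_succ,
    mul_two]

theorem Vk_succ (j : ℕ) :
    Vk (j + 1) = Vk j ∪ (Vk j).image (diagShift (2 ^ j)) ∪ blockLT j ∪ blockGT j := by
  ext x
  rw [image_diagShift_Vk]
  simp only [Vk, blockLT, blockGT, mem_union, mem_product, mem_range, mem_Ico, pow_succ]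
  omega

theorem disjoint_quadrants (j : ℕ) :
    Disjoint (Vk j) ((Vk j).image (diagShift (2 ^ j))) ∧
      Disjoint (Vk j ∪ (Vk j).image (diagShift (2 ^ j))) (blockLT j) ∧
      Disjoint (Vk j ∪ (Vk j).image (diagShift (2 ^ j)) ∪ blockLT j) (blockGT j) := by
  rw [image_diagShift_Vk]
  refine ⟨?_, ?_, ?_⟩ <;>
  · simp only [Vk, blockLT, blockGT, disjoint_left, mem_union, mem_product, mem_range, mem_Ico,
      pow_succ]
    omega

def bisectionPartition : (k : ℕ) → Finpartition (Vk k)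
  | 0 => .indiscrete (ne_empty_of_mem (a := (0, 0)) (by simp [Vk]))
  | j + 1 =>
    let P := bisectionPartition j
    have hdisj := disjoint_quadrants j
    let diagonal := P.disjUnion (P.image (diagShift_injective (2 ^ j))) hdisj.1
    let lt := Finpartition.indiscrete (ne_empty_of_mem (zero_two_pow_mem_blockLT j))
    let gt := Finpartition.indiscrete (ne_empty_of_mem (two_pow_zero_mem_blockGT j))
    ((diagonal.disjUnion lt hdisj.2.1).disjUnion gt hdisj.2.2).copy (Vk_succ j).symm

theorem parts_bisectionPartition (k : ℕ) : (bisectionPartition k).parts = Btile k := by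
  induction k with
  | zero => rfl
  | succ j ih =>
    rw [Btile_succ, ← ih, insert_eq, ← union_assoc]
    rfl

theorem exists_eq_product_of_mem_Btile {k : ℕ} {R : Finset (ℕ × ℕ)} (hR : R ∈ Btile k) :
    ∃ S S' : Finset ℕ, R = S ×ˢ S' := by
  induction k generalizing R with
  | zero => exact ⟨{0}, {0}, mem_singleton.mp hR⟩
  | succ j ih =>
    simp only [Btile_succ, mem_union, mem_image, mem_insert, mem_singleton] at hR
    rcases hR with (hR | ⟨R₀, hR₀, rfl⟩) | rfl | rfl
    · exact ih hR
    · obtain ⟨S, S', rfl⟩ := ih hR₀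
      exact ⟨_, _, shiftTile_product _ S S'⟩
    · exact ⟨_, _, rfl⟩
    · exact ⟨_, _, rfl⟩

theorem mono_Mil_Btile (k : ℕ) : Mono Mil (Btile k) := by
  induction k with
  | zero =>
    intro R hR x hx y hy
    rw [mem_singleton.mp hR, mem_singleton] at hx hy
    rw [hx, hy]
  | succ j ih =>
    intro R hR x hx y hy
    simp only [Btile_succ, mem_union, mem_image, mem_insert, mem_singleton] at hR
    rcases hR with (hR | ⟨R₀, hR₀, rfl⟩) | rfl | rfl
    · exact ih R hR x hx y hy
    · rw [shiftTile_eq_image_diagShift] at hx hy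
      obtain ⟨x₀, hx₀, rfl⟩ := mem_image.mp hx
      obtain ⟨y₀, hy₀, rfl⟩ := mem_image.mp hy
      rw [Mil_diagShift, Mil_diagShift]
      exact ih R₀ hR₀ x₀ hx₀ y₀ hy₀
    · rw [Mil_of_mem_blockLT hx, Mil_of_mem_blockLT hy]
    · rw [Mil_of_mem_blockGT hx, Mil_of_mem_blockGT hy]

-- Counting through `bisectionPartition` makes the four families of tiles visibly disjoint.
theorem card_filter_Btile_succ (j v : ℕ) :
    #((Btile (j + 1)).filter fun R => ∀ x ∈ R, Mil x = v) =
      2 * #((Btile j).filter fun R => ∀ x ∈ R, Mil x = v) +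
        #(({blockLT j} : Finset _).filter fun R => ∀ x ∈ R, Mil x = v) +
        #(({blockGT j} : Finset _).filter fun R => ∀ x ∈ R, Mil x = v) := by
  rw [← parts_bisectionPartition, bisectionPartition, Finpartition.copy_parts,
    Finpartition.card_filter_parts_disjUnion, Finpartition.card_filter_parts_disjUnion,
    Finpartition.card_filter_parts_disjUnion, Finpartition.card_filter_parts_image]
  simp only [Finpartition.indiscrete_parts, parts_bisectionPartition, forall_mem_image,
    Mil_diagShift]
  ring

theorem card_filter_Btile_Mil_one (k : ℕ) :
    #((Btile k).filter fun R => ∀ x ∈ R, Mil x = 1) = 2 ^ (k + 1) - 1 := by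
  induction k with
  | zero => decide
  | succ j ih =>
    have hLT : ¬ ∀ x ∈ blockLT j, Mil x = 1 := fun h => by
      simpa [Mil_of_mem_blockLT (zero_two_pow_mem_blockLT j)] using h _ (zero_two_pow_mem_blockLT j)
    have hGT : ∀ x ∈ blockGT j, Mil x = 1 := fun _ => Mil_of_mem_blockGT
    rw [card_filter_Btile_succ, ih, filter_singleton, filter_singleton, if_neg hLT, if_pos hGT,
      card_empty, card_singleton, pow_succ 2 (j + 1)]
    have := Nat.one_le_two_pow (n := j + 1)
    omega

theorem card_filter_Btile_Mil_two (k : ℕ) :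
    #((Btile k).filter fun R => ∀ x ∈ R, Mil x = 2) = 2 ^ k - 1 := by
  induction k with
  | zero => decide
  | succ j ih =>
    have hLT : ∀ x ∈ blockLT j, Mil x = 2 := fun _ => Mil_of_mem_blockLT
    have hGT : ¬ ∀ x ∈ blockGT j, Mil x = 2 := fun h => by
      simpa [Mil_of_mem_blockGT (two_pow_zero_mem_blockGT j)] using h _ (two_pow_zero_mem_blockGT j)
    rw [card_filter_Btile_succ, ih, filter_singleton, filter_singleton, if_pos hLT, if_neg hGT,
      card_empty, card_singleton, pow_succ 2 j]
    have := Nat.one_le_two_pow (n := j)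
    omega

/-- The bisection-protocol tiling `B_k` is a `Mil`-monochromatic
tiling of `V` with exactly `2^{k+1} − 1` tiles on which `Mil` takes the value
`1` and exactly `2^k − 1` tiles on which it takes the value `2`, and its
average-case objective PAR equals `3·2^{k−1} − 1/2`. -/
theorem stmt3 (k : ℕ) (hk : 1 ≤ k) :
    IsTiling k (Btile k) ∧ Mono Mil (Btile k) ∧
      ((Btile k).filter fun R => ∀ x ∈ R, Mil x = 1).card = 2 ^ (k + 1) - 1 ∧
      ((Btile k).filter fun R => ∀ x ∈ R, Mil x = 2).card = 2 ^ k - 1 ∧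
      avgObjPAR k Mil (Btile k) = 3 * 2 ^ (k - 1) - 1 / 2 := by
  have hparts := parts_bisectionPartition k
  refine ⟨?_, mono_Mil_Btile k, card_filter_Btile_Mil_one k, card_filter_Btile_Mil_two k, ?_⟩
  · rw [← hparts]
    exact (bisectionPartition k).isTiling fun _ hR => exists_eq_product_of_mem_Btile (hparts ▸ hR)
  · rw [avgObjPAR, ← hparts,
      (bisectionPartition k).sum_card_ideal_Mil_div_card_tileOf (hparts ▸ mono_Mil_Btile k), hparts,
      card_filter_Btile_Mil_one, card_filter_Btile_Mil_two, card_filter_Vk_Mil_one,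
      card_filter_Vk_Mil_two, Nat.cast_sub Nat.one_le_two_pow, Nat.cast_sub Nat.one_le_two_pow]
    obtain ⟨m, rfl⟩ := Nat.exists_eq_add_of_le' hk
    push_cast
    field_simp
    ring
end

section
/- The average-case subjective PAR of the bisection-protocol tiling B_k for the function Mil_k equals k/2 + 1. -/
open Finset

lemma mem_shiftTile {a : ℕ} {R : Finset (ℕ × ℕ)} {p q : ℕ} :
    (p, q) ∈ shiftTile a R ↔ a ≤ p ∧ a ≤ q ∧ (p - a, q - a) ∈ R := by
  constructor
  · rintro h
    simp only [shiftTile, mem_image, Prod.ext_iff] at h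
    obtain ⟨⟨u, v⟩, hu, h1, h2⟩ := h
    refine ⟨by omega, by omega, ?_⟩
    have : p - a = u := by omega
    have : q - a = v := by omega
    simp_all
  · rintro ⟨h1, h2, h3⟩
    simp only [shiftTile, mem_image]
    exact ⟨(p - a, q - a), h3, by simp [Prod.ext_iff]; omega⟩

lemma Btile_subset : ∀ j, ∀ R ∈ Btile j, R ⊆ Vk j := by
  intro j
  induction j with
  | zero =>
    intro R hR
    simp only [Btile, mem_singleton] at hR
    subst hR
    intro x hx
    simp only [mem_singleton] at hx
    simp [hx, mem_Vk]
  | succ j ih =>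
    intro R hR
    simp only [Btile, mem_union, mem_image, mem_insert, mem_singleton] at hR
    have hpow : 2 ^ j < 2 ^ (j + 1) := by
      have := Nat.pow_lt_pow_succ (a := 2) (by norm_num) (n := j); omega
    rcases hR with ((h | h) | h | h)
    · intro x hx
      have := ih R h hx
      rw [mem_Vk] at this ⊢
      omega
    · obtain ⟨R', hR', rfl⟩ := h
      rintro ⟨p, q⟩ hx
      rw [mem_shiftTile] at hx
      have := ih _ hR' hx.2.2
      rw [mem_Vk] at this ⊢
      have h2 : 2 ^ (j + 1) = 2 ^ j + 2 ^ j := by ring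
      simp only at this ⊢
      omega
    · subst h
      rintro ⟨p, q⟩ hx
      simp only [mem_product, mem_range, mem_Ico] at hx
      rw [mem_Vk]
      constructor <;> simp <;> omega
    · subst h
      rintro ⟨p, q⟩ hx
      simp only [mem_product, mem_range, mem_Ico] at hx
      rw [mem_Vk]
      constructor <;> simp <;> omega

lemma tileOf_eq_of {T : Finset (Finset (ℕ × ℕ))} {x : ℕ × ℕ} {R : Finset (ℕ × ℕ)}
    (hR : R ∈ T) (hx : x ∈ R) (huniq : ∀ R' ∈ T, x ∈ R' → R' = R) : tileOf T x = R := by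
  have hfilt : T.filter (fun R => x ∈ R) = {R} := by
    ext R'
    simp only [mem_filter, mem_singleton]
    constructor
    · rintro ⟨h1, h2⟩; exact huniq R' h1 h2
    · rintro rfl; exact ⟨hR, hx⟩
  rw [tileOf, hfilt]
  simp

lemma Btile_uniq : ∀ j, ∀ x : ℕ × ℕ, ∀ R ∈ Btile j, ∀ R' ∈ Btile j,
    x ∈ R → x ∈ R' → R = R' := by
  intro j
  induction j with
  | zero =>
    intro x R hR R' hR' _ _
    simp only [Btile, mem_singleton] at hR hR'
    rw [hR, hR']
  | succ j ih =>
    intro x R hR R' hR' hxR hxR'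
    have loc : ∀ S ∈ Btile j, ∀ y : ℕ × ℕ, y ∈ S → y.1 < 2 ^ j ∧ y.2 < 2 ^ j :=
      fun S hS y hy => mem_Vk.mp (Btile_subset j S hS hy)
    have locs : ∀ S : Finset (ℕ × ℕ), ∀ y : ℕ × ℕ, y ∈ shiftTile (2 ^ j) S →
        2 ^ j ≤ y.1 ∧ 2 ^ j ≤ y.2 := by
      rintro S ⟨p, q⟩ hy
      rw [mem_shiftTile] at hy
      exact ⟨hy.1, hy.2.1⟩
    simp only [Btile, mem_union, mem_image, mem_insert, mem_singleton] at hR hR'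
    obtain ⟨p, q⟩ := x
    rcases hR with ((h | ⟨R₁, hR₁, rfl⟩) | h | h) <;>
      rcases hR' with ((h' | ⟨R₂, hR₂, rfl⟩) | h' | h')
    · exact ih (p, q) R h R' h' hxR hxR'
    · exact absurd (locs R₂ _ hxR').1 (by have := (loc R h _ hxR).1; simp at this ⊢; omega)
    · subst h'; simp only [mem_product, mem_Ico] at hxR'
      exact absurd hxR'.2.1 (by have := (loc R h _ hxR).2; simp at this ⊢; omega)
    · subst h'; simp only [mem_product, mem_Ico] at hxR'
      exact absurd hxR'.1.1 (by have := (loc R h _ hxR).1; simp at this ⊢; omega)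
    · exact absurd (locs R₁ _ hxR).1 (by have := (loc R' h' _ hxR').1; simp at this ⊢; omega)
    · rw [mem_shiftTile] at hxR hxR'
      rw [ih _ _ hR₁ _ hR₂ hxR.2.2 hxR'.2.2]
    · subst h'; simp only [mem_product, mem_range] at hxR'
      exact absurd hxR'.1 (by have := (locs R₁ _ hxR).1; simp at this ⊢; omega)
    · subst h'; simp only [mem_product, mem_range] at hxR'
      exact absurd hxR'.2 (by have := (locs R₁ _ hxR).2; simp at this ⊢; omega)
    · subst h; simp only [mem_product, mem_Ico] at hxR
      exact absurd hxR.2.1 (by have := (loc R' h' _ hxR').2; simp at this ⊢; omega)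
    · subst h; simp only [mem_product, mem_range] at hxR
      exact absurd hxR.1 (by have := (locs R₂ _ hxR').1; simp at this ⊢; omega)
    · rw [h, h']
    · subst h; subst h'
      simp only [mem_product, mem_range, mem_Ico] at hxR hxR'
      omega
    · subst h; simp only [mem_product, mem_Ico] at hxR
      exact absurd hxR.1.1 (by have := (loc R' h' _ hxR').1; simp at this ⊢; omega)
    · subst h; simp only [mem_product, mem_range] at hxR
      exact absurd hxR.2 (by have := (locs R₂ _ hxR').2; simp at this ⊢; omega)
    · subst h; subst h'
      simp only [mem_product, mem_range, mem_Ico] at hxR hxR'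
      omega
    · rw [h, h']

lemma Btile_exists : ∀ j, ∀ x ∈ Vk j, ∃ R ∈ Btile j, x ∈ R := by
  intro j
  induction j with
  | zero =>
    intro x hx
    rw [mem_Vk] at hx
    refine ⟨{(0, 0)}, by simp [Btile], ?_⟩
    obtain ⟨p, q⟩ := x
    simp only at hx
    simp only [mem_singleton, Prod.ext_iff]
    omega
  | succ j ih =>
    rintro ⟨p, q⟩ hx
    rw [mem_Vk] at hx
    have h2 : 2 ^ (j + 1) = 2 ^ j + 2 ^ j := by ring
    by_cases hp : p < 2 ^ j <;> by_cases hq : q < 2 ^ j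
    · obtain ⟨R, hR, hxR⟩ := ih (p, q) (mem_Vk.mpr ⟨hp, hq⟩)
      exact ⟨R, by simp [Btile, hR], hxR⟩
    · refine ⟨Finset.range (2 ^ j) ×ˢ Finset.Ico (2 ^ j) (2 ^ (j + 1)), by simp [Btile], ?_⟩
      simp only [mem_product, mem_range, mem_Ico]
      omega
    · refine ⟨Finset.Ico (2 ^ j) (2 ^ (j + 1)) ×ˢ Finset.range (2 ^ j), by simp [Btile], ?_⟩
      simp only [mem_product, mem_range, mem_Ico]
      omega
    · obtain ⟨R, hR, hxR⟩ := ih (p - 2 ^ j, q - 2 ^ j) (mem_Vk.mpr ⟨by omega, by omega⟩)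
      refine ⟨shiftTile (2 ^ j) R, ?_, ?_⟩
      · simp only [Btile, mem_union, mem_image]
        exact Or.inl (Or.inr ⟨R, hR, rfl⟩)
      · rw [mem_shiftTile]
        exact ⟨by omega, by omega, hxR⟩

lemma tile_spec {j : ℕ} {x : ℕ × ℕ} (hx : x ∈ Vk j) :
    tileOf (Btile j) x ∈ Btile j ∧ x ∈ tileOf (Btile j) x := by
  obtain ⟨R, hR, hxR⟩ := Btile_exists j x hx
  rw [tileOf_eq_of hR hxR (fun R' h' hx' => Btile_uniq j x R' h' R hR hx' hxR)]
  exact ⟨hR, hxR⟩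

lemma tile_Q00 {j : ℕ} {x : ℕ × ℕ} (hx : x ∈ Vk j) :
    tileOf (Btile (j + 1)) x = tileOf (Btile j) x := by
  obtain ⟨hmem, hxin⟩ := tile_spec hx
  have hmem' : tileOf (Btile j) x ∈ Btile (j + 1) := by
    simp only [Btile, mem_union]; exact Or.inl (Or.inl hmem)
  exact tileOf_eq_of hmem' hxin
    (fun R' h' hx' => Btile_uniq (j + 1) x R' h' _ hmem' hx' hxin)

lemma tile_Q11 {j : ℕ} {x : ℕ × ℕ} (hx : x ∈ Vk j) :
    tileOf (Btile (j + 1)) (x.1 + 2 ^ j, x.2 + 2 ^ j)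
      = shiftTile (2 ^ j) (tileOf (Btile j) x) := by
  obtain ⟨hmem, hxin⟩ := tile_spec hx
  have hmem' : shiftTile (2 ^ j) (tileOf (Btile j) x) ∈ Btile (j + 1) := by
    simp only [Btile, mem_union, mem_image]
    exact Or.inl (Or.inr ⟨_, hmem, rfl⟩)
  have hxin' : (x.1 + 2 ^ j, x.2 + 2 ^ j) ∈ shiftTile (2 ^ j) (tileOf (Btile j) x) := by
    rw [mem_shiftTile]
    refine ⟨by omega, by omega, ?_⟩
    simpa using hxin
  exact tileOf_eq_of hmem' hxin'
    (fun R' h' hx' => Btile_uniq (j + 1) _ R' h' _ hmem' hx' hxin')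

lemma tile_Q01 {j p q : ℕ} (hp : p < 2 ^ j) (hq1 : 2 ^ j ≤ q) (hq2 : q < 2 ^ (j + 1)) :
    tileOf (Btile (j + 1)) (p, q)
      = Finset.range (2 ^ j) ×ˢ Finset.Ico (2 ^ j) (2 ^ (j + 1)) := by
  have hmem' : Finset.range (2 ^ j) ×ˢ Finset.Ico (2 ^ j) (2 ^ (j + 1)) ∈ Btile (j + 1) := by
    simp [Btile]
  have hxin' : (p, q) ∈ Finset.range (2 ^ j) ×ˢ Finset.Ico (2 ^ j) (2 ^ (j + 1)) := by
    simp only [mem_product, mem_range, mem_Ico]; omega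
  exact tileOf_eq_of hmem' hxin'
    (fun R' h' hx' => Btile_uniq (j + 1) _ R' h' _ hmem' hx' hxin')

lemma tile_Q10 {j p q : ℕ} (hp : 2 ^ j ≤ p) (hp2 : p < 2 ^ (j + 1)) (hq : q < 2 ^ j) :
    tileOf (Btile (j + 1)) (p, q)
      = Finset.Ico (2 ^ j) (2 ^ (j + 1)) ×ˢ Finset.range (2 ^ j) := by
  have hmem' : Finset.Ico (2 ^ j) (2 ^ (j + 1)) ×ˢ Finset.range (2 ^ j) ∈ Btile (j + 1) := by
    simp [Btile]
  have hxin' : (p, q) ∈ Finset.Ico (2 ^ j) (2 ^ (j + 1)) ×ˢ Finset.range (2 ^ j) := by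
    simp only [mem_product, mem_range, mem_Ico]; omega
  exact tileOf_eq_of hmem' hxin'
    (fun R' h' hx' => Btile_uniq (j + 1) _ R' h' _ hmem' hx' hxin')

/-! ### Row/column slice counts and ideal counts -/

def rr (j : ℕ) (x : ℕ × ℕ) : ℕ :=
  (((Finset.range (2 ^ j)).filter fun y => (x.1, y) ∈ tileOf (Btile j) x)).card

def cc (j : ℕ) (x : ℕ × ℕ) : ℕ :=
  (((Finset.range (2 ^ j)).filter fun y => (y, x.2) ∈ tileOf (Btile j) x)).card

def g1 (j : ℕ) (x : ℕ × ℕ) : ℕ :=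
  (((Finset.range (2 ^ j)).filter fun y => Mil (x.1, y) = Mil x)).card

def g2 (j : ℕ) (x : ℕ × ℕ) : ℕ :=
  (((Finset.range (2 ^ j)).filter fun y => Mil (y, x.2) = Mil x)).card

lemma filter_range_congr {p : ℕ → Prop} [DecidablePred p] {m n : ℕ} (hmn : m ≤ n)
    (h : ∀ y, p y → y < m) :
    (Finset.range n).filter p = (Finset.range m).filter p := by
  ext y
  simp only [mem_filter, mem_range]
  constructor
  · rintro ⟨_, hp⟩; exact ⟨h y hp, hp⟩
  · rintro ⟨hy, hp⟩; exact ⟨by omega, hp⟩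

lemma card_filter_le {n a : ℕ} (h : a < n) :
    ((Finset.range n).filter fun y => y ≤ a).card = a + 1 := by
  rw [show (Finset.range n).filter (fun y => y ≤ a) = Finset.range (a + 1) by
    ext y; simp only [mem_filter, mem_range]; omega]
  exact Finset.card_range _

lemma card_filter_gt' {n a : ℕ} (h : a < n) :
    ((Finset.range n).filter fun y => a < y).card = n - a - 1 := by
  rw [show (Finset.range n).filter (fun y => a < y) = Finset.Ico (a + 1) n by
    ext y; simp only [mem_filter, mem_range, mem_Ico]; omega]
  rw [Nat.card_Ico]; omega

lemma card_filter_lt {n a : ℕ} (h : a ≤ n) :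
    ((Finset.range n).filter fun y => y < a).card = a := by
  rw [show (Finset.range n).filter (fun y => y < a) = Finset.range a by
    ext y; simp only [mem_filter, mem_range]; omega]
  exact Finset.card_range _

lemma card_filter_ge {n a : ℕ} :
    ((Finset.range n).filter fun y => a ≤ y).card = n - a := by
  rw [show (Finset.range n).filter (fun y => a ≤ y) = Finset.Ico a n by
    ext y; simp only [mem_filter, mem_range, mem_Ico]; omega]
  exact Nat.card_Ico _ _

lemma Mil_eq_iff {a b c d : ℕ} : Mil (a, b) = Mil (c, d) ↔ (b ≤ a ↔ d ≤ c) := by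
  simp only [Mil]
  split_ifs with h1 h2 h2 <;> simp [h1, h2]

lemma Mil_shift {a b c : ℕ} : Mil (a + c, b + c) = Mil (a, b) := by
  simp only [Mil, add_le_add_iff_right]

lemma g1_eq {j : ℕ} {x : ℕ × ℕ} (hx : x.1 < 2 ^ j) :
    g1 j x = if x.2 ≤ x.1 then x.1 + 1 else 2 ^ j - x.1 - 1 := by
  unfold g1
  by_cases h : x.2 ≤ x.1
  · rw [if_pos h]
    rw [Finset.filter_congr (fun y _ => by
      show (Mil (x.1, y) = Mil x) ↔ (y ≤ x.1)
      rw [show (x : ℕ × ℕ) = (x.1, x.2) from rfl, Mil_eq_iff]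
      constructor
      · intro hiff; exact hiff.mpr h
      · intro hy; exact ⟨fun _ => h, fun _ => hy⟩)]
    exact card_filter_le hx
  · rw [if_neg h]
    rw [Finset.filter_congr (fun y _ => by
      show (Mil (x.1, y) = Mil x) ↔ (x.1 < y)
      rw [show (x : ℕ × ℕ) = (x.1, x.2) from rfl, Mil_eq_iff]
      constructor
      · intro hiff
        by_contra hc
        exact h (hiff.mp (by omega))
      · intro hy; constructor <;> intro h' <;> omega)]
    exact card_filter_gt' hx

lemma g2_eq {j : ℕ} {x : ℕ × ℕ} (hx : x.2 < 2 ^ j) :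
    g2 j x = if x.2 ≤ x.1 then 2 ^ j - x.2 else x.2 := by
  unfold g2
  by_cases h : x.2 ≤ x.1
  · rw [if_pos h]
    rw [Finset.filter_congr (fun y _ => by
      show (Mil (y, x.2) = Mil x) ↔ (x.2 ≤ y)
      rw [show (x : ℕ × ℕ) = (x.1, x.2) from rfl, Mil_eq_iff]
      constructor
      · intro hiff; exact hiff.mpr h
      · intro hy; exact ⟨fun _ => h, fun _ => hy⟩)]
    exact card_filter_ge
  · rw [if_neg h]
    rw [Finset.filter_congr (fun y _ => by
      show (Mil (y, x.2) = Mil x) ↔ (y < x.2)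
      rw [show (x : ℕ × ℕ) = (x.1, x.2) from rfl, Mil_eq_iff]
      constructor
      · intro hiff
        by_contra hc
        exact h (hiff.mp (by omega))
      · intro hy; constructor <;> intro h' <;> omega)]
    exact card_filter_lt (by omega)

lemma pow_succ_eq {j : ℕ} : (2 : ℕ) ^ (j + 1) = 2 ^ j + 2 ^ j := by omega

lemma rr_Q00 {j : ℕ} {x : ℕ × ℕ} (hx : x ∈ Vk j) : rr (j + 1) x = rr j x := by
  unfold rr
  rw [tile_Q00 hx]
  congr 1
  exact filter_range_congr (Nat.pow_le_pow_right (by norm_num) (by omega))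
    (fun y hy => (mem_Vk.mp (Btile_subset j _ (tile_spec hx).1 hy)).2)

lemma cc_Q00 {j : ℕ} {x : ℕ × ℕ} (hx : x ∈ Vk j) : cc (j + 1) x = cc j x := by
  unfold cc
  rw [tile_Q00 hx]
  congr 1
  exact filter_range_congr (Nat.pow_le_pow_right (by norm_num) (by omega))
    (fun y hy => (mem_Vk.mp (Btile_subset j _ (tile_spec hx).1 hy)).1)

lemma filter_shift_row {a p : ℕ} {R : Finset (ℕ × ℕ)} :
    ((Finset.range (a + a)).filter fun y => (p + a, y) ∈ shiftTile a R).card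
      = ((Finset.range a).filter fun y => (p, y) ∈ R).card := by
  rw [show (Finset.range (a + a)).filter (fun y => (p + a, y) ∈ shiftTile a R)
      = ((Finset.range a).filter fun y => (p, y) ∈ R).image (· + a) by
    ext y
    simp only [mem_filter, mem_range, mem_image, mem_shiftTile]
    constructor
    · rintro ⟨hy, _, hq, hmem⟩
      rw [Nat.add_sub_cancel] at hmem
      exact ⟨y - a, ⟨by omega, hmem⟩, by omega⟩
    · rintro ⟨z, ⟨hz, hmem⟩, rfl⟩
      refine ⟨by omega, by omega, by omega, ?_⟩
      rwa [Nat.add_sub_cancel, Nat.add_sub_cancel]]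
  exact Finset.card_image_of_injective _ (add_left_injective a)

lemma filter_shift_col {a q : ℕ} {R : Finset (ℕ × ℕ)} :
    ((Finset.range (a + a)).filter fun y => (y, q + a) ∈ shiftTile a R).card
      = ((Finset.range a).filter fun y => (y, q) ∈ R).card := by
  rw [show (Finset.range (a + a)).filter (fun y => (y, q + a) ∈ shiftTile a R)
      = ((Finset.range a).filter fun y => (y, q) ∈ R).image (· + a) by
    ext y
    simp only [mem_filter, mem_range, mem_image, mem_shiftTile]
    constructor
    · rintro ⟨hy, hq', _, hmem⟩
      rw [Nat.add_sub_cancel] at hmem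
      exact ⟨y - a, ⟨by omega, hmem⟩, by omega⟩
    · rintro ⟨z, ⟨hz, hmem⟩, rfl⟩
      refine ⟨by omega, by omega, by omega, ?_⟩
      rwa [Nat.add_sub_cancel, Nat.add_sub_cancel]]
  exact Finset.card_image_of_injective _ (add_left_injective a)

lemma rr_Q11 {j : ℕ} {x : ℕ × ℕ} (hx : x ∈ Vk j) :
    rr (j + 1) (x.1 + 2 ^ j, x.2 + 2 ^ j) = rr j x := by
  unfold rr
  rw [tile_Q11 hx, pow_succ_eq]
  exact filter_shift_row

lemma cc_Q11 {j : ℕ} {x : ℕ × ℕ} (hx : x ∈ Vk j) :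
    cc (j + 1) (x.1 + 2 ^ j, x.2 + 2 ^ j) = cc j x := by
  unfold cc
  rw [tile_Q11 hx, pow_succ_eq]
  exact filter_shift_col

lemma rr_Q01 {j p q : ℕ} (hp : p < 2 ^ j) (hq1 : 2 ^ j ≤ q) (hq2 : q < 2 ^ (j + 1)) :
    rr (j + 1) (p, q) = 2 ^ j := by
  unfold rr
  rw [tile_Q01 hp hq1 hq2]
  rw [Finset.filter_congr (fun y hy => by
    show ((p, q).1, y) ∈ Finset.range (2 ^ j) ×ˢ Finset.Ico (2 ^ j) (2 ^ (j + 1)) ↔ 2 ^ j ≤ y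
    simp only [mem_product, mem_range, mem_Ico, mem_range] at hy ⊢
    omega)]
  rw [card_filter_ge]
  have := pow_succ_eq (j := j); omega

lemma rr_Q10 {j p q : ℕ} (hp : 2 ^ j ≤ p) (hp2 : p < 2 ^ (j + 1)) (hq : q < 2 ^ j) :
    rr (j + 1) (p, q) = 2 ^ j := by
  unfold rr
  rw [tile_Q10 hp hp2 hq]
  rw [Finset.filter_congr (fun y hy => by
    show ((p, q).1, y) ∈ Finset.Ico (2 ^ j) (2 ^ (j + 1)) ×ˢ Finset.range (2 ^ j) ↔ y < 2 ^ j
    simp only [mem_product, mem_range, mem_Ico, mem_range] at hy ⊢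
    omega)]
  exact card_filter_lt (by have := pow_succ_eq (j := j); omega)

lemma cc_Q01 {j p q : ℕ} (hp : p < 2 ^ j) (hq1 : 2 ^ j ≤ q) (hq2 : q < 2 ^ (j + 1)) :
    cc (j + 1) (p, q) = 2 ^ j := by
  unfold cc
  rw [tile_Q01 hp hq1 hq2]
  rw [Finset.filter_congr (fun y hy => by
    show (y, (p, q).2) ∈ Finset.range (2 ^ j) ×ˢ Finset.Ico (2 ^ j) (2 ^ (j + 1)) ↔ y < 2 ^ j
    simp only [mem_product, mem_range, mem_Ico, mem_range] at hy ⊢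
    omega)]
  exact card_filter_lt (by have := pow_succ_eq (j := j); omega)

lemma cc_Q10 {j p q : ℕ} (hp : 2 ^ j ≤ p) (hp2 : p < 2 ^ (j + 1)) (hq : q < 2 ^ j) :
    cc (j + 1) (p, q) = 2 ^ j := by
  unfold cc
  rw [tile_Q10 hp hp2 hq]
  rw [Finset.filter_congr (fun y hy => by
    show (y, (p, q).2) ∈ Finset.Ico (2 ^ j) (2 ^ (j + 1)) ×ˢ Finset.range (2 ^ j) ↔ 2 ^ j ≤ y
    simp only [mem_product, mem_range, mem_Ico, mem_range] at hy ⊢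
    omega)]
  rw [card_filter_ge]
  have := pow_succ_eq (j := j); omega

/-! ### Sum decomposition -/

lemma sum_range_split {M : Type*} [AddCommMonoid M] {m n : ℕ} (h : m ≤ n) (f : ℕ → M) :
    ∑ i ∈ Finset.range n, f i
      = ∑ i ∈ Finset.range m, f i + ∑ i ∈ Finset.Ico m n, f i := by
  simp only [Finset.range_eq_Ico]
  exact (Finset.sum_Ico_consecutive _ (Nat.zero_le m) h).symm

lemma sumIcoShift (j : ℕ) (f : ℕ → ℚ) :
    ∑ i ∈ Finset.Ico (2 ^ j) (2 ^ (j + 1)), f i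
      = ∑ i ∈ Finset.range (2 ^ j), f (i + 2 ^ j) := by
  rw [Finset.sum_Ico_eq_sum_range]
  rw [show 2 ^ (j + 1) - 2 ^ j = 2 ^ j by
    have := pow_succ_eq (j := j); generalize (2 : ℕ) ^ j = a at *; omega]
  exact Finset.sum_congr rfl fun i _ => by rw [Nat.add_comm]

lemma sum_Vsucc (j : ℕ) (F : ℕ × ℕ → ℚ) :
    ∑ x ∈ Vk (j + 1), F x
      = ∑ x ∈ Vk j, F x
        + ∑ x ∈ Vk j, F (x.1 + 2 ^ j, x.2 + 2 ^ j)
        + ∑ p ∈ Finset.range (2 ^ j), ∑ q ∈ Finset.Ico (2 ^ j) (2 ^ (j + 1)), F (p, q)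
        + ∑ p ∈ Finset.Ico (2 ^ j) (2 ^ (j + 1)), ∑ q ∈ Finset.range (2 ^ j), F (p, q) := by
  have hle : (2 : ℕ) ^ j ≤ 2 ^ (j + 1) := by
    have := pow_succ_eq (j := j); generalize (2 : ℕ) ^ j = a at *; omega
  have e00 : ∑ x ∈ Vk j, F x
      = ∑ p ∈ Finset.range (2 ^ j), ∑ q ∈ Finset.range (2 ^ j), F (p, q) := by
    rw [Vk, Finset.sum_product]
  have e11 : ∑ x ∈ Vk j, F (x.1 + 2 ^ j, x.2 + 2 ^ j)
      = ∑ p ∈ Finset.Ico (2 ^ j) (2 ^ (j + 1)),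
          ∑ q ∈ Finset.Ico (2 ^ j) (2 ^ (j + 1)), F (p, q) := by
    rw [Vk, Finset.sum_product]
    rw [sumIcoShift j (fun p => ∑ q ∈ Finset.Ico (2 ^ j) (2 ^ (j + 1)), F (p, q))]
    exact Finset.sum_congr rfl fun p _ => (sumIcoShift j (fun q => F (p + 2 ^ j, q))).symm
  rw [e00, e11, Vk, Finset.sum_product]
  rw [sum_range_split hle (fun p => ∑ q ∈ Finset.range (2 ^ (j + 1)), F (p, q))]
  have h1 : ∀ s : Finset ℕ, ∑ p ∈ s, ∑ q ∈ Finset.range (2 ^ (j + 1)), F (p, q)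
      = ∑ p ∈ s, (∑ q ∈ Finset.range (2 ^ j), F (p, q)
        + ∑ q ∈ Finset.Ico (2 ^ j) (2 ^ (j + 1)), F (p, q)) :=
    fun s => Finset.sum_congr rfl fun p _ => sum_range_split hle _
  rw [h1, h1, Finset.sum_add_distrib, Finset.sum_add_distrib]
  ring

lemma sum_range_cast (n : ℕ) : ∑ i ∈ Finset.range n, (i : ℚ) = n * (n - 1) / 2 := by
  induction n with
  | zero => simp
  | succ n ih =>
    rw [Finset.sum_range_succ, ih]
    push_cast
    ring

/-! ### Pointwise ideal-count recurrences -/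

lemma g1_Q00 {j : ℕ} {x : ℕ × ℕ} (hx : x ∈ Vk j) :
    g1 (j + 1) x = g1 j x + (if x.2 ≤ x.1 then 0 else 2 ^ j) := by
  have h := mem_Vk.mp hx
  have hps := pow_succ_eq (j := j)
  have hp : x.1 < 2 ^ (j + 1) := by omega
  rw [g1_eq hp, g1_eq h.1]
  split_ifs <;>
    (generalize (2 : ℕ) ^ (j + 1) = b at *; generalize (2 : ℕ) ^ j = a at *; omega)

lemma g1_Q11 {j : ℕ} {x : ℕ × ℕ} (hx : x ∈ Vk j) :
    g1 (j + 1) (x.1 + 2 ^ j, x.2 + 2 ^ j) = g1 j x + (if x.2 ≤ x.1 then 2 ^ j else 0) := by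
  have h := mem_Vk.mp hx
  have hps := pow_succ_eq (j := j)
  have hp : (x.1 + 2 ^ j, x.2 + 2 ^ j).1 < 2 ^ (j + 1) := by simp only; omega
  rw [g1_eq hp, g1_eq h.1]
  simp only [Nat.add_le_add_iff_right]
  split_ifs <;>
    (generalize (2 : ℕ) ^ (j + 1) = b at *; generalize (2 : ℕ) ^ j = a at *; omega)

lemma g2_Q00 {j : ℕ} {x : ℕ × ℕ} (hx : x ∈ Vk j) :
    g2 (j + 1) x = g2 j x + (if x.2 ≤ x.1 then 2 ^ j else 0) := by
  have h := mem_Vk.mp hx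
  have hps := pow_succ_eq (j := j)
  have hq : x.2 < 2 ^ (j + 1) := by omega
  rw [g2_eq hq, g2_eq h.2]
  split_ifs <;>
    (generalize (2 : ℕ) ^ (j + 1) = b at *; generalize (2 : ℕ) ^ j = a at *; omega)

lemma g2_Q11 {j : ℕ} {x : ℕ × ℕ} (hx : x ∈ Vk j) :
    g2 (j + 1) (x.1 + 2 ^ j, x.2 + 2 ^ j) = g2 j x + (if x.2 ≤ x.1 then 0 else 2 ^ j) := by
  have h := mem_Vk.mp hx
  have hps := pow_succ_eq (j := j)
  have hq : (x.1 + 2 ^ j, x.2 + 2 ^ j).2 < 2 ^ (j + 1) := by simp only; omega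
  rw [g2_eq hq, g2_eq h.2]
  simp only [Nat.add_le_add_iff_right]
  split_ifs <;>
    (generalize (2 : ℕ) ^ (j + 1) = b at *; generalize (2 : ℕ) ^ j = a at *; omega)

/-! ### The six sums -/

def S1 (j : ℕ) : ℚ := ∑ x ∈ Vk j, (g1 j x : ℚ) / (rr j x : ℚ)
def A1 (j : ℕ) : ℚ := ∑ x ∈ Vk j, (if x.2 ≤ x.1 then (0 : ℚ) else 1) / (rr j x : ℚ)
def B1 (j : ℕ) : ℚ := ∑ x ∈ Vk j, (if x.2 ≤ x.1 then (1 : ℚ) else 0) / (rr j x : ℚ)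
def S2 (j : ℕ) : ℚ := ∑ x ∈ Vk j, (g2 j x : ℚ) / (cc j x : ℚ)
def A2 (j : ℕ) : ℚ := ∑ x ∈ Vk j, (if x.2 ≤ x.1 then (0 : ℚ) else 1) / (cc j x : ℚ)
def B2 (j : ℕ) : ℚ := ∑ x ∈ Vk j, (if x.2 ≤ x.1 then (1 : ℚ) else 0) / (cc j x : ℚ)

lemma Vk_zero : Vk 0 = {((0, 0) : ℕ × ℕ)} := by decide

lemma rr_zero : rr 0 (0, 0) = 1 := by decide
lemma cc_zero : cc 0 (0, 0) = 1 := by decide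
lemma g1_zero : g1 0 (0, 0) = 1 := by decide
lemma g2_zero : g2 0 (0, 0) = 1 := by decide

lemma A1_zero : A1 0 = 0 := by
  rw [A1, Vk_zero, Finset.sum_singleton]
  norm_num

lemma B1_zero : B1 0 = 1 := by
  rw [B1, Vk_zero, Finset.sum_singleton, rr_zero]
  norm_num

lemma S1_zero : S1 0 = 1 := by
  rw [S1, Vk_zero, Finset.sum_singleton, rr_zero, g1_zero]
  norm_num

lemma A2_zero : A2 0 = 0 := by
  rw [A2, Vk_zero, Finset.sum_singleton]
  norm_num

lemma B2_zero : B2 0 = 1 := by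
  rw [B2, Vk_zero, Finset.sum_singleton, cc_zero]
  norm_num

lemma S2_zero : S2 0 = 1 := by
  rw [S2, Vk_zero, Finset.sum_singleton, cc_zero, g2_zero]
  norm_num

lemma pow_sub_pow {j : ℕ} : 2 ^ (j + 1) - 2 ^ j = 2 ^ j := by
  have := pow_succ_eq (j := j)
  generalize (2 : ℕ) ^ (j + 1) = b at *; generalize (2 : ℕ) ^ j = a at *; omega

lemma A1_succ (j : ℕ) : A1 (j + 1) = 2 * A1 j + 2 ^ j := by
  rw [A1, sum_Vsucc j (fun x => (if x.2 ≤ x.1 then (0 : ℚ) else 1) / (rr (j + 1) x : ℚ))]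
  have h00 : ∑ x ∈ Vk j, (if x.2 ≤ x.1 then (0 : ℚ) else 1) / (rr (j + 1) x : ℚ) = A1 j := by
    rw [A1]
    exact Finset.sum_congr rfl fun x hx => by rw [rr_Q00 hx]
  have h11 : ∑ x ∈ Vk j,
      (if (x.1 + 2 ^ j, x.2 + 2 ^ j).2 ≤ (x.1 + 2 ^ j, x.2 + 2 ^ j).1 then (0 : ℚ) else 1)
        / (rr (j + 1) (x.1 + 2 ^ j, x.2 + 2 ^ j) : ℚ) = A1 j := by
    rw [A1]
    refine Finset.sum_congr rfl fun x hx => ?_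
    rw [rr_Q11 hx]
    congr 1
    simp only [Nat.add_le_add_iff_right]
  have h01 : ∑ p ∈ Finset.range (2 ^ j), ∑ q ∈ Finset.Ico (2 ^ j) (2 ^ (j + 1)),
      (if ((p, q) : ℕ × ℕ).2 ≤ (p, q).1 then (0 : ℚ) else 1) / (rr (j + 1) (p, q) : ℚ)
        = 2 ^ j := by
    have e : ∑ p ∈ Finset.range (2 ^ j), ∑ q ∈ Finset.Ico (2 ^ j) (2 ^ (j + 1)),
        (if ((p, q) : ℕ × ℕ).2 ≤ (p, q).1 then (0 : ℚ) else 1) / (rr (j + 1) (p, q) : ℚ)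
          = ∑ _p ∈ Finset.range (2 ^ j), ∑ _q ∈ Finset.Ico (2 ^ j) (2 ^ (j + 1)),
              ((2 : ℚ) ^ j)⁻¹ := by
      refine Finset.sum_congr rfl fun p hp => Finset.sum_congr rfl fun q hq => ?_
      rw [mem_range] at hp
      rw [mem_Ico] at hq
      show (if q ≤ p then (0 : ℚ) else 1) / (rr (j + 1) (p, q) : ℚ) = ((2 : ℚ) ^ j)⁻¹
      rw [if_neg (by omega), rr_Q01 hp hq.1 hq.2, one_div]
      push_cast
      rfl
    rw [e]
    simp only [Finset.sum_const, Nat.card_Ico, Finset.card_range, pow_sub_pow, nsmul_eq_mul]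
    push_cast
    have hne : ((2 : ℚ) ^ j) ≠ 0 := pow_ne_zero _ two_ne_zero
    field_simp
  have h10 : ∑ p ∈ Finset.Ico (2 ^ j) (2 ^ (j + 1)), ∑ q ∈ Finset.range (2 ^ j),
      (if ((p, q) : ℕ × ℕ).2 ≤ (p, q).1 then (0 : ℚ) else 1) / (rr (j + 1) (p, q) : ℚ)
        = 0 := by
    refine Finset.sum_eq_zero fun p hp => Finset.sum_eq_zero fun q hq => ?_
    rw [mem_Ico] at hp
    rw [mem_range] at hq
    show (if q ≤ p then (0 : ℚ) else 1) / (rr (j + 1) (p, q) : ℚ) = 0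
    rw [if_pos (by omega), zero_div]
  rw [h00, h11, h01, h10]
  ring

lemma B1_succ (j : ℕ) : B1 (j + 1) = 2 * B1 j + 2 ^ j := by
  rw [B1, sum_Vsucc j (fun x => (if x.2 ≤ x.1 then (1 : ℚ) else 0) / (rr (j + 1) x : ℚ))]
  have h00 : ∑ x ∈ Vk j, (if x.2 ≤ x.1 then (1 : ℚ) else 0) / (rr (j + 1) x : ℚ) = B1 j := by
    rw [B1]
    exact Finset.sum_congr rfl fun x hx => by rw [rr_Q00 hx]
  have h11 : ∑ x ∈ Vk j,
      (if (x.1 + 2 ^ j, x.2 + 2 ^ j).2 ≤ (x.1 + 2 ^ j, x.2 + 2 ^ j).1 then (1 : ℚ) else 0)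
        / (rr (j + 1) (x.1 + 2 ^ j, x.2 + 2 ^ j) : ℚ) = B1 j := by
    rw [B1]
    refine Finset.sum_congr rfl fun x hx => ?_
    rw [rr_Q11 hx]
    congr 1
    simp only [Nat.add_le_add_iff_right]
  have h01 : ∑ p ∈ Finset.range (2 ^ j), ∑ q ∈ Finset.Ico (2 ^ j) (2 ^ (j + 1)),
      (if ((p, q) : ℕ × ℕ).2 ≤ (p, q).1 then (1 : ℚ) else 0) / (rr (j + 1) (p, q) : ℚ)
        = 0 := by
    refine Finset.sum_eq_zero fun p hp => Finset.sum_eq_zero fun q hq => ?_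
    rw [mem_range] at hp
    rw [mem_Ico] at hq
    show (if q ≤ p then (1 : ℚ) else 0) / (rr (j + 1) (p, q) : ℚ) = 0
    rw [if_neg (by omega), zero_div]
  have h10 : ∑ p ∈ Finset.Ico (2 ^ j) (2 ^ (j + 1)), ∑ q ∈ Finset.range (2 ^ j),
      (if ((p, q) : ℕ × ℕ).2 ≤ (p, q).1 then (1 : ℚ) else 0) / (rr (j + 1) (p, q) : ℚ)
        = 2 ^ j := by
    have e : ∑ p ∈ Finset.Ico (2 ^ j) (2 ^ (j + 1)), ∑ q ∈ Finset.range (2 ^ j),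
        (if ((p, q) : ℕ × ℕ).2 ≤ (p, q).1 then (1 : ℚ) else 0) / (rr (j + 1) (p, q) : ℚ)
          = ∑ _p ∈ Finset.Ico (2 ^ j) (2 ^ (j + 1)), ∑ _q ∈ Finset.range (2 ^ j),
              ((2 : ℚ) ^ j)⁻¹ := by
      refine Finset.sum_congr rfl fun p hp => Finset.sum_congr rfl fun q hq => ?_
      rw [mem_Ico] at hp
      rw [mem_range] at hq
      show (if q ≤ p then (1 : ℚ) else 0) / (rr (j + 1) (p, q) : ℚ) = ((2 : ℚ) ^ j)⁻¹
      rw [if_pos (by omega), rr_Q10 hp.1 hp.2 hq, one_div]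
      push_cast
      rfl
    rw [e]
    simp only [Finset.sum_const, Nat.card_Ico, Finset.card_range, pow_sub_pow, nsmul_eq_mul]
    push_cast
    have hne : ((2 : ℚ) ^ j) ≠ 0 := pow_ne_zero _ two_ne_zero
    field_simp
  rw [h00, h11, h01, h10]
  ring

lemma A2_succ (j : ℕ) : A2 (j + 1) = 2 * A2 j + 2 ^ j := by
  rw [A2, sum_Vsucc j (fun x => (if x.2 ≤ x.1 then (0 : ℚ) else 1) / (cc (j + 1) x : ℚ))]
  have h00 : ∑ x ∈ Vk j, (if x.2 ≤ x.1 then (0 : ℚ) else 1) / (cc (j + 1) x : ℚ) = A2 j := by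
    rw [A2]
    exact Finset.sum_congr rfl fun x hx => by rw [cc_Q00 hx]
  have h11 : ∑ x ∈ Vk j,
      (if (x.1 + 2 ^ j, x.2 + 2 ^ j).2 ≤ (x.1 + 2 ^ j, x.2 + 2 ^ j).1 then (0 : ℚ) else 1)
        / (cc (j + 1) (x.1 + 2 ^ j, x.2 + 2 ^ j) : ℚ) = A2 j := by
    rw [A2]
    refine Finset.sum_congr rfl fun x hx => ?_
    rw [cc_Q11 hx]
    congr 1
    simp only [Nat.add_le_add_iff_right]
  have h01 : ∑ p ∈ Finset.range (2 ^ j), ∑ q ∈ Finset.Ico (2 ^ j) (2 ^ (j + 1)),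
      (if ((p, q) : ℕ × ℕ).2 ≤ (p, q).1 then (0 : ℚ) else 1) / (cc (j + 1) (p, q) : ℚ)
        = 2 ^ j := by
    have e : ∑ p ∈ Finset.range (2 ^ j), ∑ q ∈ Finset.Ico (2 ^ j) (2 ^ (j + 1)),
        (if ((p, q) : ℕ × ℕ).2 ≤ (p, q).1 then (0 : ℚ) else 1) / (cc (j + 1) (p, q) : ℚ)
          = ∑ _p ∈ Finset.range (2 ^ j), ∑ _q ∈ Finset.Ico (2 ^ j) (2 ^ (j + 1)),
              ((2 : ℚ) ^ j)⁻¹ := by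
      refine Finset.sum_congr rfl fun p hp => Finset.sum_congr rfl fun q hq => ?_
      rw [mem_range] at hp
      rw [mem_Ico] at hq
      show (if q ≤ p then (0 : ℚ) else 1) / (cc (j + 1) (p, q) : ℚ) = ((2 : ℚ) ^ j)⁻¹
      rw [if_neg (by omega), cc_Q01 hp hq.1 hq.2, one_div]
      push_cast
      rfl
    rw [e]
    simp only [Finset.sum_const, Nat.card_Ico, Finset.card_range, pow_sub_pow, nsmul_eq_mul]
    push_cast
    have hne : ((2 : ℚ) ^ j) ≠ 0 := pow_ne_zero _ two_ne_zero
    field_simp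
  have h10 : ∑ p ∈ Finset.Ico (2 ^ j) (2 ^ (j + 1)), ∑ q ∈ Finset.range (2 ^ j),
      (if ((p, q) : ℕ × ℕ).2 ≤ (p, q).1 then (0 : ℚ) else 1) / (cc (j + 1) (p, q) : ℚ)
        = 0 := by
    refine Finset.sum_eq_zero fun p hp => Finset.sum_eq_zero fun q hq => ?_
    rw [mem_Ico] at hp
    rw [mem_range] at hq
    show (if q ≤ p then (0 : ℚ) else 1) / (cc (j + 1) (p, q) : ℚ) = 0
    rw [if_pos (by omega), zero_div]
  rw [h00, h11, h01, h10]
  ring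

lemma B2_succ (j : ℕ) : B2 (j + 1) = 2 * B2 j + 2 ^ j := by
  rw [B2, sum_Vsucc j (fun x => (if x.2 ≤ x.1 then (1 : ℚ) else 0) / (cc (j + 1) x : ℚ))]
  have h00 : ∑ x ∈ Vk j, (if x.2 ≤ x.1 then (1 : ℚ) else 0) / (cc (j + 1) x : ℚ) = B2 j := by
    rw [B2]
    exact Finset.sum_congr rfl fun x hx => by rw [cc_Q00 hx]
  have h11 : ∑ x ∈ Vk j,
      (if (x.1 + 2 ^ j, x.2 + 2 ^ j).2 ≤ (x.1 + 2 ^ j, x.2 + 2 ^ j).1 then (1 : ℚ) else 0)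
        / (cc (j + 1) (x.1 + 2 ^ j, x.2 + 2 ^ j) : ℚ) = B2 j := by
    rw [B2]
    refine Finset.sum_congr rfl fun x hx => ?_
    rw [cc_Q11 hx]
    congr 1
    simp only [Nat.add_le_add_iff_right]
  have h01 : ∑ p ∈ Finset.range (2 ^ j), ∑ q ∈ Finset.Ico (2 ^ j) (2 ^ (j + 1)),
      (if ((p, q) : ℕ × ℕ).2 ≤ (p, q).1 then (1 : ℚ) else 0) / (cc (j + 1) (p, q) : ℚ)
        = 0 := by
    refine Finset.sum_eq_zero fun p hp => Finset.sum_eq_zero fun q hq => ?_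
    rw [mem_range] at hp
    rw [mem_Ico] at hq
    show (if q ≤ p then (1 : ℚ) else 0) / (cc (j + 1) (p, q) : ℚ) = 0
    rw [if_neg (by omega), zero_div]
  have h10 : ∑ p ∈ Finset.Ico (2 ^ j) (2 ^ (j + 1)), ∑ q ∈ Finset.range (2 ^ j),
      (if ((p, q) : ℕ × ℕ).2 ≤ (p, q).1 then (1 : ℚ) else 0) / (cc (j + 1) (p, q) : ℚ)
        = 2 ^ j := by
    have e : ∑ p ∈ Finset.Ico (2 ^ j) (2 ^ (j + 1)), ∑ q ∈ Finset.range (2 ^ j),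
        (if ((p, q) : ℕ × ℕ).2 ≤ (p, q).1 then (1 : ℚ) else 0) / (cc (j + 1) (p, q) : ℚ)
          = ∑ _p ∈ Finset.Ico (2 ^ j) (2 ^ (j + 1)), ∑ _q ∈ Finset.range (2 ^ j),
              ((2 : ℚ) ^ j)⁻¹ := by
      refine Finset.sum_congr rfl fun p hp => Finset.sum_congr rfl fun q hq => ?_
      rw [mem_Ico] at hp
      rw [mem_range] at hq
      show (if q ≤ p then (1 : ℚ) else 0) / (cc (j + 1) (p, q) : ℚ) = ((2 : ℚ) ^ j)⁻¹
      rw [if_pos (by omega), cc_Q10 hp.1 hp.2 hq, one_div]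
      push_cast
      rfl
    rw [e]
    simp only [Finset.sum_const, Nat.card_Ico, Finset.card_range, pow_sub_pow, nsmul_eq_mul]
    push_cast
    have hne : ((2 : ℚ) ^ j) ≠ 0 := pow_ne_zero _ two_ne_zero
    field_simp
  rw [h00, h11, h01, h10]
  ring

lemma four_pow_eq {j : ℕ} : (4 : ℚ) ^ j = 2 ^ j * 2 ^ j := by
  rw [show (4 : ℚ) = 2 * 2 by norm_num, mul_pow]

lemma sum_range_lin (j : ℕ) (a b : ℚ) :
    ∑ i ∈ Finset.range (2 ^ j), (a + b * i) = 2 ^ j * a + b * (2 ^ j * (2 ^ j - 1) / 2) := by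
  simp only [Finset.sum_add_distrib, Finset.sum_const, Finset.card_range, nsmul_eq_mul,
    ← Finset.mul_sum, sum_range_cast]
  push_cast
  ring

lemma S1_succ (j : ℕ) :
    S1 (j + 1) = 2 * S1 j + 2 ^ j * A1 j + 2 ^ j * B1 j + 3 * 4 ^ j := by
  have hne : ((2 : ℚ) ^ j) ≠ 0 := pow_ne_zero _ two_ne_zero
  rw [S1, sum_Vsucc j (fun x => (g1 (j + 1) x : ℚ) / (rr (j + 1) x : ℚ))]
  have h00 : ∑ x ∈ Vk j, (g1 (j + 1) x : ℚ) / (rr (j + 1) x : ℚ)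
      = S1 j + 2 ^ j * A1 j := by
    rw [S1, A1, Finset.mul_sum, ← Finset.sum_add_distrib]
    refine Finset.sum_congr rfl fun x hx => ?_
    rw [g1_Q00 hx, rr_Q00 hx]
    split_ifs <;> push_cast <;> ring
  have h11 : ∑ x ∈ Vk j, (g1 (j + 1) (x.1 + 2 ^ j, x.2 + 2 ^ j) : ℚ)
      / (rr (j + 1) (x.1 + 2 ^ j, x.2 + 2 ^ j) : ℚ) = S1 j + 2 ^ j * B1 j := by
    rw [S1, B1, Finset.mul_sum, ← Finset.sum_add_distrib]
    refine Finset.sum_congr rfl fun x hx => ?_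
    rw [g1_Q11 hx, rr_Q11 hx]
    split_ifs <;> push_cast <;> ring
  have h01 : ∑ p ∈ Finset.range (2 ^ j), ∑ q ∈ Finset.Ico (2 ^ j) (2 ^ (j + 1)),
      (g1 (j + 1) (p, q) : ℚ) / (rr (j + 1) (p, q) : ℚ)
        = 2 ^ j * (2 ^ j * 2 - 1) + (-1) * (2 ^ j * (2 ^ j - 1) / 2) := by
    have e0 : ∀ p ∈ Finset.range (2 ^ j), ∑ q ∈ Finset.Ico (2 ^ j) (2 ^ (j + 1)),
        (g1 (j + 1) (p, q) : ℚ) / (rr (j + 1) (p, q) : ℚ)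
          = (2 : ℚ) ^ j * 2 - 1 + (-1) * p := by
      intro p hp
      rw [mem_range] at hp
      have hps := pow_succ_eq (j := j)
      have e : ∑ q ∈ Finset.Ico (2 ^ j) (2 ^ (j + 1)),
          (g1 (j + 1) (p, q) : ℚ) / (rr (j + 1) (p, q) : ℚ)
            = ∑ _q ∈ Finset.Ico (2 ^ j) (2 ^ (j + 1)),
                ((2 : ℚ) ^ j * 2 - 1 + (-1) * p) / 2 ^ j := by
        refine Finset.sum_congr rfl fun q hq => ?_
        rw [mem_Ico] at hq
        rw [rr_Q01 hp hq.1 hq.2]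
        have hval : (g1 (j + 1) (p, q) : ℚ) = (2 : ℚ) ^ j * 2 - 1 + (-1) * p := by
          rw [g1_eq (show ((p, q) : ℕ × ℕ).1 < 2 ^ (j + 1) by simp only; omega)]
          rw [if_neg (show ¬((p, q) : ℕ × ℕ).2 ≤ (p, q).1 by simp only; omega)]
          have h1 : p + 1 ≤ 2 ^ (j + 1) := by omega
          rw [Nat.sub_sub, Nat.cast_sub h1]
          push_cast [pow_succ]
          ring
        rw [hval]
        push_cast
        ring
      rw [e]
      simp only [Finset.sum_const, Nat.card_Ico, pow_sub_pow, nsmul_eq_mul]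
      push_cast
      field_simp
    rw [Finset.sum_congr rfl e0, sum_range_lin]
  have h10 : ∑ p ∈ Finset.Ico (2 ^ j) (2 ^ (j + 1)), ∑ q ∈ Finset.range (2 ^ j),
      (g1 (j + 1) (p, q) : ℚ) / (rr (j + 1) (p, q) : ℚ)
        = 2 ^ j * (2 ^ j + 1) + 1 * (2 ^ j * (2 ^ j - 1) / 2) := by
    have e0 : ∀ p ∈ Finset.Ico ((2 : ℕ) ^ j) (2 ^ (j + 1)), ∑ q ∈ Finset.range (2 ^ j),
        (g1 (j + 1) (p, q) : ℚ) / (rr (j + 1) (p, q) : ℚ) = (p : ℚ) + 1 := by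
      intro p hp
      rw [mem_Ico] at hp
      have hps := pow_succ_eq (j := j)
      have e : ∑ q ∈ Finset.range (2 ^ j),
          (g1 (j + 1) (p, q) : ℚ) / (rr (j + 1) (p, q) : ℚ)
            = ∑ _q ∈ Finset.range (2 ^ j), ((p : ℚ) + 1) / 2 ^ j := by
        refine Finset.sum_congr rfl fun q hq => ?_
        rw [mem_range] at hq
        rw [rr_Q10 hp.1 hp.2 hq]
        have hval : (g1 (j + 1) (p, q) : ℚ) = (p : ℚ) + 1 := by
          rw [g1_eq (show ((p, q) : ℕ × ℕ).1 < 2 ^ (j + 1) by simp only; omega)]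
          rw [if_pos (show ((p, q) : ℕ × ℕ).2 ≤ (p, q).1 by simp only; omega)]
          push_cast
          ring
        rw [hval]
        push_cast
        ring
      rw [e]
      simp only [Finset.sum_const, Finset.card_range, nsmul_eq_mul]
      push_cast
      field_simp
    rw [Finset.sum_congr rfl e0, sumIcoShift j (fun i => (i : ℚ) + 1)]
    have e2 : ∀ i ∈ Finset.range (2 ^ j), ((i + 2 ^ j : ℕ) : ℚ) + 1
        = ((2 : ℚ) ^ j + 1) + 1 * i := by
      intro i _
      push_cast
      ring
    rw [Finset.sum_congr rfl e2, sum_range_lin]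
  rw [h00, h11, h01, h10]
  rw [four_pow_eq]
  ring

lemma S2_succ (j : ℕ) :
    S2 (j + 1) = 2 * S2 j + 2 ^ j * A2 j + 2 ^ j * B2 j + 3 * 4 ^ j := by
  have hne : ((2 : ℚ) ^ j) ≠ 0 := pow_ne_zero _ two_ne_zero
  rw [S2, sum_Vsucc j (fun x => (g2 (j + 1) x : ℚ) / (cc (j + 1) x : ℚ))]
  have h00 : ∑ x ∈ Vk j, (g2 (j + 1) x : ℚ) / (cc (j + 1) x : ℚ)
      = S2 j + 2 ^ j * B2 j := by
    rw [S2, B2, Finset.mul_sum, ← Finset.sum_add_distrib]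
    refine Finset.sum_congr rfl fun x hx => ?_
    rw [g2_Q00 hx, cc_Q00 hx]
    split_ifs <;> push_cast <;> ring
  have h11 : ∑ x ∈ Vk j, (g2 (j + 1) (x.1 + 2 ^ j, x.2 + 2 ^ j) : ℚ)
      / (cc (j + 1) (x.1 + 2 ^ j, x.2 + 2 ^ j) : ℚ) = S2 j + 2 ^ j * A2 j := by
    rw [S2, A2, Finset.mul_sum, ← Finset.sum_add_distrib]
    refine Finset.sum_congr rfl fun x hx => ?_
    rw [g2_Q11 hx, cc_Q11 hx]
    split_ifs <;> push_cast <;> ring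
  have h01 : ∑ p ∈ Finset.range (2 ^ j), ∑ q ∈ Finset.Ico (2 ^ j) (2 ^ (j + 1)),
      (g2 (j + 1) (p, q) : ℚ) / (cc (j + 1) (p, q) : ℚ)
        = 2 ^ j * (2 ^ j) + 1 * (2 ^ j * (2 ^ j - 1) / 2) := by
    have e0 : ∀ p ∈ Finset.range (2 ^ j), ∑ q ∈ Finset.Ico (2 ^ j) (2 ^ (j + 1)),
        (g2 (j + 1) (p, q) : ℚ) / (cc (j + 1) (p, q) : ℚ)
          = ∑ q ∈ Finset.Ico ((2 : ℕ) ^ j) (2 ^ (j + 1)), (q : ℚ) / 2 ^ j := by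
      intro p hp
      rw [mem_range] at hp
      refine Finset.sum_congr rfl fun q hq => ?_
      rw [mem_Ico] at hq
      rw [cc_Q01 hp hq.1 hq.2]
      have hval : (g2 (j + 1) (p, q) : ℚ) = (q : ℚ) := by
        rw [g2_eq (show ((p, q) : ℕ × ℕ).2 < 2 ^ (j + 1) by simp only; omega)]
        rw [if_neg (show ¬((p, q) : ℕ × ℕ).2 ≤ (p, q).1 by simp only; omega)]
      rw [hval]
      push_cast
      ring
    rw [Finset.sum_congr rfl e0, sumIcoShift j (fun i => (i : ℚ) / 2 ^ j)]
    have e2 : ∀ i ∈ Finset.range (2 ^ j), ((i + 2 ^ j : ℕ) : ℚ) / 2 ^ j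
        = (1 + ((2 : ℚ) ^ j)⁻¹ * i) := by
      intro i _
      push_cast
      field_simp
      ring
    rw [Finset.sum_congr rfl e2, sum_range_lin, Finset.sum_const, Finset.card_range,
      nsmul_eq_mul]
    push_cast
    field_simp
  have h10 : ∑ p ∈ Finset.Ico (2 ^ j) (2 ^ (j + 1)), ∑ q ∈ Finset.range (2 ^ j),
      (g2 (j + 1) (p, q) : ℚ) / (cc (j + 1) (p, q) : ℚ)
        = 2 ^ j * (2 ^ j * 2) + (-1) * (2 ^ j * (2 ^ j - 1) / 2) := by
    have hps := pow_succ_eq (j := j)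
    have e0 : ∀ p ∈ Finset.Ico ((2 : ℕ) ^ j) (2 ^ (j + 1)), ∑ q ∈ Finset.range (2 ^ j),
        (g2 (j + 1) (p, q) : ℚ) / (cc (j + 1) (p, q) : ℚ)
          = ∑ q ∈ Finset.range (2 ^ j), ((2 : ℚ) ^ j * 2 + (-1) * q) / 2 ^ j := by
      intro p hp
      rw [mem_Ico] at hp
      refine Finset.sum_congr rfl fun q hq => ?_
      rw [mem_range] at hq
      rw [cc_Q10 hp.1 hp.2 hq]
      have hval : (g2 (j + 1) (p, q) : ℚ) = (2 : ℚ) ^ j * 2 + (-1) * q := by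
        rw [g2_eq (show ((p, q) : ℕ × ℕ).2 < 2 ^ (j + 1) by simp only; omega)]
        rw [if_pos (show ((p, q) : ℕ × ℕ).2 ≤ (p, q).1 by simp only; omega)]
        rw [Nat.cast_sub (by omega)]
        push_cast [pow_succ]
        ring
      rw [hval]
      push_cast
      ring
    rw [Finset.sum_congr rfl e0]
    have e2 : ∀ q ∈ Finset.range (2 ^ j), ((2 : ℚ) ^ j * 2 + (-1) * q) / 2 ^ j
        = 2 + (-((2 : ℚ) ^ j)⁻¹) * q := by
      intro q _
      field_simp
    rw [show (∑ q ∈ Finset.range (2 ^ j), ((2 : ℚ) ^ j * 2 + (-1) * q) / 2 ^ j)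
        = ∑ q ∈ Finset.range (2 ^ j), (2 + (-((2 : ℚ) ^ j)⁻¹) * q) from
      Finset.sum_congr rfl e2]
    rw [sum_range_lin, Finset.sum_const, Nat.card_Ico, pow_sub_pow, nsmul_eq_mul]
    push_cast
    field_simp
  rw [h00, h11, h01, h10]
  rw [four_pow_eq]
  ring

lemma AB_closed : ∀ j : ℕ, A1 j = j * 2 ^ j / 2 ∧ B1 j = (j + 2) * 2 ^ j / 2
    ∧ A2 j = j * 2 ^ j / 2 ∧ B2 j = (j + 2) * 2 ^ j / 2 := by
  intro j
  induction j with
  | zero =>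
    rw [A1_zero, B1_zero, A2_zero, B2_zero]
    norm_num
  | succ j ih =>
    obtain ⟨ha1, hb1, ha2, hb2⟩ := ih
    refine ⟨?_, ?_, ?_, ?_⟩
    · rw [A1_succ, ha1]; push_cast; ring
    · rw [B1_succ, hb1]; push_cast; ring
    · rw [A2_succ, ha2]; push_cast; ring
    · rw [B2_succ, hb2]; push_cast; ring

lemma S_closed : ∀ j : ℕ, S1 j = (j + 2) * 4 ^ j / 2 ∧ S2 j = (j + 2) * 4 ^ j / 2 := by
  intro j
  induction j with
  | zero =>
    rw [S1_zero, S2_zero]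
    norm_num
  | succ j ih =>
    obtain ⟨hs1, hs2⟩ := ih
    obtain ⟨ha1, hb1, ha2, hb2⟩ := AB_closed j
    constructor
    · rw [S1_succ, hs1, ha1, hb1, four_pow_eq, four_pow_eq]
      push_cast
      ring
    · rw [S2_succ, hs2, ha2, hb2, four_pow_eq, four_pow_eq]
      push_cast
      ring

lemma avgPAR1_eq (k : ℕ) : avgPAR1 k Mil (Btile k) = (k : ℚ) / 2 + 1 := by
  have h1 : avgPAR1 k Mil (Btile k) = S1 k / 2 ^ (2 * k) := rfl
  rw [h1, (S_closed k).1]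
  have h2 : ((2 : ℚ)) ^ (2 * k) = 4 ^ k := by
    rw [two_mul, pow_add, ← four_pow_eq]
  rw [h2]
  have hne : ((4 : ℚ) ^ k) ≠ 0 := pow_ne_zero _ (by norm_num)
  field_simp

lemma avgPAR2_eq (k : ℕ) : avgPAR2 k Mil (Btile k) = (k : ℚ) / 2 + 1 := by
  have h1 : avgPAR2 k Mil (Btile k) = S2 k / 2 ^ (2 * k) := rfl
  rw [h1, (S_closed k).2]
  have h2 : ((2 : ℚ)) ^ (2 * k) = 4 ^ k := by
    rw [two_mul, pow_add, ← four_pow_eq]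
  rw [h2]
  have hne : ((4 : ℚ) ^ k) ≠ 0 := pow_ne_zero _ (by norm_num)
  field_simp

/-- The average-case subjective PAR of the bisection-protocol
tiling `B_k` for `Mil` equals `k/2 + 1`. -/
theorem stmt4 (k : ℕ) (hk : 1 ≤ k) :
    max (avgPAR1 k Mil (Btile k)) (avgPAR2 k Mil (Btile k)) = (k : ℚ) / 2 + 1 := by
  rw [avgPAR1_eq, avgPAR2_eq, max_self]
end

section
/- Every deterministic communication protocol computing Mil_k has worst-case subjective PAR at least √(2^k) (equivalently, the square of its worst-case subjective PAR is at least 2^k). -/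
/-- A deterministic two-party communication protocol: a finite rooted binary
tree, each internal node assigned to a party `i ∈ {0,1}` (party `0` is party 1,
party `1` is party 2) and labeled with a function `g` of that party's input. -/
inductive Protocol : Type where
  | leaf : Protocol
  | node (i : Fin 2) (g : ℕ → Bool) (t0 t1 : Protocol) : Protocol

/-- The sequence of branching bits on input `x`; two inputs reach the same leaf
iff they have the same transcript. -/
def transcript : Protocol → ℕ × ℕ → List Bool
  | .leaf, _ => []
  | .node i g t0 t1, x =>
    if g (if i = 0 then x.1 else x.2) then true :: transcript t1 x
    else false :: transcript t0 x

/-- The protocol `P` computes `f` on `Vk k`: `f` is constant on the set of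
inputs reaching any given leaf. -/
def Computes {β : Type} (k : ℕ) (f : ℕ × ℕ → β) (P : Protocol) : Prop :=
  ∀ x ∈ Vk k, ∀ y ∈ Vk k, transcript P x = transcript P y → f x = f y

/-- The worst-case PAR of `P` with respect to party 1. -/
def wcPAR1 {β : Type} [DecidableEq β] (k : ℕ) (f : ℕ × ℕ → β) (P : Protocol) : ℚ :=
  Finset.sup' (Vk k) ⟨(0, 0), by simp [Vk, Nat.two_pow_pos]⟩ fun x =>
    (((Finset.range (2 ^ k)).filter fun y => f (x.1, y) = f x).card : ℚ) /
      (((Finset.range (2 ^ k)).filter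
          fun y => transcript P (x.1, y) = transcript P x).card : ℚ)

/-- The worst-case PAR of `P` with respect to party 2. -/
def wcPAR2 {β : Type} [DecidableEq β] (k : ℕ) (f : ℕ × ℕ → β) (P : Protocol) : ℚ :=
  Finset.sup' (Vk k) ⟨(0, 0), by simp [Vk, Nat.two_pow_pos]⟩ fun x =>
    (((Finset.range (2 ^ k)).filter fun y => f (y, x.2) = f x).card : ℚ) /
      (((Finset.range (2 ^ k)).filter
          fun y => transcript P (y, x.2) = transcript P x).card : ℚ)

lemma transcript_rect (P : Protocol) : ∀ (a b c d : ℕ),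
    transcript P (a, b) = transcript P (c, d) →
    transcript P (a, d) = transcript P (a, b) := by
  induction P with
  | leaf => intro a b c d _; rfl
  | node i g t0 t1 ih0 ih1 =>
    intro a b c d h
    fin_cases i <;> simp only [transcript] at h ⊢ <;> norm_num at h ⊢
    · by_cases hg : g a <;> by_cases hg' : g c <;>
        simp [hg, hg'] at h ⊢
      · exact ih1 a b c d h
      · exact ih0 a b c d h
    · by_cases hg : g b <;> by_cases hg' : g d <;>
        simp [hg, hg'] at h ⊢
      · exact ih1 a b c d h
      · exact ih0 a b c d h

set_option maxHeartbeats 1000000 in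
/-- every deterministic communication protocol computing `Mil` has
worst-case subjective PAR at least `√(2^k)`; equivalently, the square of its
worst-case subjective PAR is at least `2^k`. -/
theorem stmt5 (k : ℕ) (hk : 1 ≤ k) (P : Protocol) (hP : Computes k Mil P) :
    (2 ^ k : ℚ) ≤ max (wcPAR1 k Mil P) (wcPAR2 k Mil P) ^ 2 := by
  set N := 2 ^ k with hNdef
  have hN1 : 1 ≤ N := Nat.one_le_two_pow
  set m := N - 1 with hmdef
  have hmN : m < N := Nat.sub_lt (by omega) one_pos
  have hmm : ∀ y, y < N → y ≤ m := by omega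
  have hmemV : ∀ a b : ℕ, a < N → b < N → (a, b) ∈ Vk k := by
    intro a b ha hb
    simp [Vk, Finset.mem_product, ← hNdef, ha, hb]
  -- the row transcript class of the top diagonal point
  set T := (Finset.range N).filter
      (fun y => transcript P (m, y) = transcript P (m, m)) with hTdef
  have hmT : m ∈ T := by simp [hTdef, hmN]
  have hTne : T.Nonempty := ⟨m, hmT⟩
  set b := T.min' hTne with hbdef
  have hbT : b ∈ T := Finset.min'_mem _ _
  have hbN : b < N := Finset.mem_range.mp (Finset.mem_filter.mp hbT).1
  have hbτ : transcript P (m, b) = transcript P (m, m) :=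
    (Finset.mem_filter.mp hbT).2
  have hTsub : T ⊆ Finset.Ico b N := by
    intro y hy
    exact Finset.mem_Ico.mpr ⟨Finset.min'_le _ _ hy,
      Finset.mem_range.mp (Finset.mem_filter.mp hy).1⟩
  have hTcard : T.card ≤ N - b := by
    simpa [Nat.card_Ico] using Finset.card_le_card hTsub
  have hTpos : 0 < T.card := Finset.card_pos.mpr hTne
  -- Part 1 : wcPAR1 ≥ N / |T|
  have hnum1 : ((Finset.range N).filter fun y => Mil (m, y) = Mil (m, m))
      = Finset.range N := by
    apply Finset.filter_true_of_mem
    intro y hy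
    have := hmm y (Finset.mem_range.mp hy)
    simp [Mil, this]
  have h1 : ((N : ℚ) / (T.card : ℚ)) ≤ wcPAR1 k Mil P := by
    have hle := Finset.le_sup' (s := Vk k)
      (f := fun x =>
        (((Finset.range (2 ^ k)).filter fun y => Mil (x.1, y) = Mil x).card : ℚ) /
          (((Finset.range (2 ^ k)).filter
              fun y => transcript P (x.1, y) = transcript P x).card : ℚ))
      (hmemV m m hmN hmN)
    rw [wcPAR1]
    refine le_trans (le_of_eq ?_) hle
    simp only [← hNdef]
    rw [hnum1, ← hTdef]
    simp
  -- Part 2 : wcPAR2 ≥ N - b, via the point (m, b)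
  have hDsingle : ((Finset.range N).filter
      fun y => transcript P (y, b) = transcript P (m, b)) = {m} := by
    ext y
    simp only [Finset.mem_filter, Finset.mem_range, Finset.mem_singleton]
    constructor
    · rintro ⟨hyN, hy⟩
      have hyb : transcript P (y, b) = transcript P (m, m) := hy.trans hbτ
      have hrect := transcript_rect P y b m m hyb
      -- transcript P (y, m) = transcript P (y, b) = transcript P (m, m)
      have hsame : transcript P (y, m) = transcript P (m, m) := hrect.trans hyb
      have := hP (y, m) (hmemV y m hyN hmN) (m, m) (hmemV m m hmN hmN) hsame
      simp only [Mil] at this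
      by_contra hne
      have hym : ¬ (m ≤ y) := by omega
      rw [if_neg hym, if_pos le_rfl] at this
      exact absurd this (by norm_num)
    · rintro rfl
      exact ⟨hmN, rfl⟩
  have hnum2 : ((Finset.range N).filter fun y => Mil (y, b) = Mil (m, b))
      = Finset.Ico b N := by
    have hbm : b ≤ m := hmm b hbN
    ext y
    simp only [Finset.mem_filter, Finset.mem_range, Finset.mem_Ico, Mil, hbm,
      if_pos]
    constructor
    · rintro ⟨hyN, hy⟩
      refine ⟨?_, hyN⟩
      by_contra hby
      rw [if_neg (by omega)] at hy
      exact absurd hy (by norm_num)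
    · rintro ⟨hby, hyN⟩
      exact ⟨hyN, by rw [if_pos hby]⟩
  have h2 : (((N - b : ℕ) : ℚ)) ≤ wcPAR2 k Mil P := by
    have hle := Finset.le_sup' (s := Vk k)
      (f := fun x =>
        (((Finset.range (2 ^ k)).filter fun y => Mil (y, x.2) = Mil x).card : ℚ) /
          (((Finset.range (2 ^ k)).filter
              fun y => transcript P (y, x.2) = transcript P x).card : ℚ))
      (hmemV m b hmN hbN)
    rw [wcPAR2]
    refine le_trans (le_of_eq ?_) hle
    simp only [← hNdef]
    rw [hnum2, hDsingle]
    simp [Nat.card_Ico]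
  -- Combine
  set p := wcPAR1 k Mil P with hp
  set q := wcPAR2 k Mil P with hq
  have hc0 : (0 : ℚ) < (T.card : ℚ) := by exact_mod_cast hTpos
  have hNc0 : (0 : ℚ) ≤ (N : ℚ) / (T.card : ℚ) := div_nonneg (Nat.cast_nonneg _) (Nat.cast_nonneg _)
  have hp0 : (0 : ℚ) ≤ p := le_trans hNc0 h1
  have hq0 : (0 : ℚ) ≤ q := le_trans (Nat.cast_nonneg _) h2
  have hcb : ((T.card : ℚ)) ≤ ((N - b : ℕ) : ℚ) := by exact_mod_cast hTcard
  have key : (N : ℚ) ≤ p * q := by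
    have step1 : (N : ℚ) = (N : ℚ) / (T.card : ℚ) * (T.card : ℚ) :=
      (div_mul_cancel₀ _ (ne_of_gt hc0)).symm
    calc (N : ℚ) = (N : ℚ) / (T.card : ℚ) * (T.card : ℚ) := step1
      _ ≤ (N : ℚ) / (T.card : ℚ) * ((N - b : ℕ) : ℚ) := by
          exact mul_le_mul_of_nonneg_left hcb hNc0
      _ ≤ p * q := by
          exact mul_le_mul h1 h2 (Nat.cast_nonneg _) hp0
  calc ((2 ^ k : ℚ)) = (N : ℚ) := by rw [hNdef]; push_cast; ring
    _ ≤ p * q := key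
    _ ≤ max p q ^ 2 := by
        rw [sq]
        exact mul_le_mul (le_max_left _ _) (le_max_right _ _) hq0
          (le_trans hp0 (le_max_left _ _))
end

section
/- The minimum, over all TPG_{k,c}-monochromatic tilings T of V, of the average-case objective PAR of T equals 1 + (c³ − c)/2^{2k+1}. -/
open Finset

lemma mem_ideal_self {β : Type} [DecidableEq β] {k : ℕ} {f : ℕ × ℕ → β} {x : ℕ × ℕ}
    (hx : x ∈ Vk k) : x ∈ ideal k f x :=
  mem_filter.mpr ⟨hx, rfl⟩

namespace IsTiling

variable {k : ℕ} {T : Finset (Finset (ℕ × ℕ))}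

lemma tileOf_eq (hT : IsTiling k T) {R : Finset (ℕ × ℕ)} {x : ℕ × ℕ} (hR : R ∈ T)
    (hx : x ∈ R) : tileOf T x = R := by
  obtain ⟨_, -, huniq⟩ := hT.2.2.2 x (hT.2.2.1 R hR hx)
  have : T.filter (fun S => x ∈ S) = {R} := by
    ext S
    simp only [mem_filter, mem_singleton]
    constructor
    · intro hS
      rw [huniq S hS, huniq R ⟨hR, hx⟩]
    · rintro rfl
      exact ⟨hR, hx⟩
  rw [tileOf, this, sup_singleton, id]

lemma tileOf_mem (hT : IsTiling k T) {x : ℕ × ℕ} (hx : x ∈ Vk k) :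
    tileOf T x ∈ T ∧ x ∈ tileOf T x := by
  obtain ⟨R, ⟨hR, hxR⟩, -⟩ := hT.2.2.2 x hx
  rw [hT.tileOf_eq hR hxR]
  exact ⟨hR, hxR⟩

lemma tileOf_subset (hT : IsTiling k T) {x : ℕ × ℕ} (hx : x ∈ Vk k) : tileOf T x ⊆ Vk k :=
  hT.2.2.1 _ (hT.tileOf_mem hx).1

lemma tileOf_subset_ideal {β : Type} [DecidableEq β] {f : ℕ × ℕ → β} (hT : IsTiling k T)
    (hM : Mono f T) {x : ℕ × ℕ} (hx : x ∈ Vk k) : tileOf T x ⊆ ideal k f x := by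
  obtain ⟨hR, hxR⟩ := hT.tileOf_mem hx
  intro y hy
  exact mem_filter.mpr ⟨hT.tileOf_subset hx hy, hM _ hR y hy x hxR⟩

/-- Each tile meeting `s` contributes `|R| · (1/|R|) = 1`. -/
lemma sum_inv_card_tileOf (hT : IsTiling k T) {s : Finset (ℕ × ℕ)} (hsV : s ⊆ Vk k)
    (hs : ∀ x ∈ s, tileOf T x ⊆ s) :
    ∑ x ∈ s, (1 : ℚ) / (tileOf T x).card = (s.image (tileOf T)).card := by
  rw [card_eq_sum_ones, Nat.cast_sum, Nat.cast_one]
  refine (sum_image' (fun x => (1 : ℚ) / (tileOf T x).card) fun x hx => ?_).symm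
  obtain ⟨hR, hxR⟩ := hT.tileOf_mem (hsV hx)
  have hfiber : s.filter (fun y => tileOf T y = tileOf T x) = tileOf T x := by
    ext y
    simp only [mem_filter]
    constructor
    · rintro ⟨hys, hy⟩
      exact hy ▸ (hT.tileOf_mem (hsV hys)).2
    · intro hy
      exact ⟨hs x hx hy, hT.tileOf_eq hR hy⟩
  rw [sum_congr rfl fun y hy => by rw [(mem_filter.mp hy).2], hfiber, sum_const,
    nsmul_eq_mul, mul_one_div_cancel]
  exact_mod_cast (card_pos.mpr ⟨x, hxR⟩).ne'

end IsTiling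

section TileMap

variable {k : ℕ} {g : ℕ × ℕ → Finset (ℕ × ℕ)}

lemma isTiling_image (hrect : ∀ x ∈ Vk k, ∃ S S' : Finset ℕ, g x = S ×ˢ S')
    (hself : ∀ x ∈ Vk k, x ∈ g x) (hsub : ∀ x ∈ Vk k, g x ⊆ Vk k)
    (hcoh : ∀ y ∈ Vk k, ∀ x ∈ g y, g x = g y) : IsTiling k ((Vk k).image g) := by
  refine ⟨?_, ?_, ?_, fun x hx => ⟨g x, ⟨mem_image_of_mem g hx, hself x hx⟩, ?_⟩⟩
  · simpa only [forall_mem_image] using hrect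
  · simpa only [forall_mem_image] using fun x hx => ⟨x, hself x hx⟩
  · simpa only [forall_mem_image] using hsub
  · rintro R ⟨hR, hxR⟩
    obtain ⟨y, hy, rfl⟩ := mem_image.mp hR
    exact (hcoh y hy x hxR).symm

lemma mono_image {β : Type} {f : ℕ × ℕ → β} (hf : ∀ y ∈ Vk k, ∀ x ∈ g y, f x = f y) :
    Mono f ((Vk k).image g) := by
  simp only [Mono, forall_mem_image]
  intro y hy x hx x' hx'
  rw [hf y hy x hx, hf y hy x' hx']

end TileMap

def doNotBuildRegion (k c : ℕ) : Finset (ℕ × ℕ) := (Vk k).filter fun x => x.1 + x.2 < c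

def buildRegion (k c : ℕ) : Finset (ℕ × ℕ) := (Vk k).filter fun x => ¬ x.1 + x.2 < c

lemma ideal_TPG_of_lt {k c : ℕ} {x : ℕ × ℕ} (hx : x.1 + x.2 < c) :
    ideal k (TPG c) x = doNotBuildRegion k c := by
  ext y
  simp only [ideal, doNotBuildRegion, mem_filter, TPG, if_pos hx, ite_eq_left_iff, reduceCtorEq,
    imp_false, not_not]

/-- A bid below `c` is pinned down by the transfer it induces, a bid of at least `c` is not. -/
def buildCell (k c a : ℕ) : Finset ℕ := if a < c then {a} else Ico c (2 ^ k)

lemma ideal_TPG_of_not_lt {k c : ℕ} {x : ℕ × ℕ} (hxV : x ∈ Vk k) (hx : ¬ x.1 + x.2 < c) :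
    ideal k (TPG c) x = buildCell k c x.1 ×ˢ buildCell k c x.2 := by
  obtain ⟨a, b⟩ := x
  rw [mem_Vk] at hxV
  ext ⟨y₁, y₂⟩
  simp only [ideal, mem_filter, mem_Vk, TPG, if_neg hx, buildCell, mem_product]
  split_ifs <;>
    simp only [Option.some.injEq, Prod.mk.injEq, mem_singleton, mem_Ico, and_false, false_iff,
      not_and] <;>
    omega

lemma doNotBuildRegion_eq_biUnion_antidiagonal {k c : ℕ} (hc : c ≤ 2 ^ k) :
    doNotBuildRegion k c = (range c).biUnion antidiagonal := by
  ext x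
  simp only [doNotBuildRegion, mem_filter, mem_Vk, mem_biUnion, mem_range,
    HasAntidiagonal.mem_antidiagonal]
  constructor
  · rintro ⟨-, hx⟩
    exact ⟨_, hx, rfl⟩
  · rintro ⟨n, hn, rfl⟩
    omega

lemma two_mul_card_doNotBuildRegion {k c : ℕ} (hc : c ≤ 2 ^ k) :
    2 * (doNotBuildRegion k c).card = c * (c + 1) := by
  rw [doNotBuildRegion_eq_biUnion_antidiagonal hc, card_biUnion]
  · simp only [Finset.Nat.card_antidiagonal]
    have := Finset.sum_range_id_mul_two (c + 1)
    rw [sum_range_succ'] at this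
    simp only [add_zero, add_tsub_cancel_right] at this
    linarith
  · intro m _ n _ hmn
    refine disjoint_left.mpr fun x hm hn => hmn ?_
    rw [HasAntidiagonal.mem_antidiagonal] at hm hn
    exact hm.symm.trans hn

lemma card_doNotBuildRegion_add_card_buildRegion (k c : ℕ) :
    (doNotBuildRegion k c).card + (buildRegion k c).card = 2 ^ (2 * k) := by
  rw [doNotBuildRegion, buildRegion, card_filter_add_card_filter_not, Vk, card_product,
    card_range, ← pow_add, two_mul]

namespace IsTiling

variable {k c : ℕ} {T : Finset (Finset (ℕ × ℕ))}

lemma sum_card_ideal_div_card_tileOf_TPG (hT : IsTiling k T) (hM : Mono (TPG c) T) :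
    ∑ x ∈ Vk k, ((ideal k (TPG c) x).card : ℚ) / (tileOf T x).card =
      ∑ x ∈ buildRegion k c, ((ideal k (TPG c) x).card : ℚ) / (tileOf T x).card +
        (doNotBuildRegion k c).card * ((doNotBuildRegion k c).image (tileOf T)).card := by
  have hdnb : ∀ x ∈ doNotBuildRegion k c, tileOf T x ⊆ doNotBuildRegion k c := fun x hx =>
    (ideal_TPG_of_lt (mem_filter.mp hx).2 : ideal k (TPG c) x = _) ▸
      hT.tileOf_subset_ideal hM (mem_filter.mp hx).1
  rw [← hT.sum_inv_card_tileOf (s := doNotBuildRegion k c) (filter_subset _ _) hdnb, mul_sum,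
    ← sum_filter_add_sum_filter_not (Vk k) (fun x => x.1 + x.2 < c), add_comm]
  congr 1
  refine sum_congr rfl fun x hx => ?_
  rw [ideal_TPG_of_lt (mem_filter.mp hx).2, mul_one_div]

/-- A rectangle containing `(i, c - 1 - i)` and `(j, c - 1 - j)` with `i < j` also contains the
"Build" point `(j, c - 1 - i)`. -/
lemma tileOf_antidiagonal_injOn (hc : c ≤ 2 ^ k) (hT : IsTiling k T) (hM : Mono (TPG c) T) :
    Set.InjOn (fun i => tileOf T (i, c - 1 - i)) (range c) := by
  suffices h : ∀ i j, i < j → j < c → tileOf T (i, c - 1 - i) ≠ tileOf T (j, c - 1 - j) by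
    intro i hi j hj hij
    simp only [coe_range, Set.mem_Iio] at hi hj
    by_contra hne
    rcases Nat.lt_or_gt_of_ne hne with hlt | hlt
    · exact h i j hlt hj hij
    · exact h j i hlt hi hij.symm
  intro i j hij hj heq
  obtain ⟨hR, hiR⟩ := hT.tileOf_mem (x := (i, c - 1 - i)) (mem_Vk.mpr ⟨by omega, by omega⟩)
  have hjR : (j, c - 1 - j) ∈ tileOf T (i, c - 1 - i) :=
    heq ▸ (hT.tileOf_mem (mem_Vk.mpr ⟨by omega, by omega⟩)).2
  have hcorner : (j, c - 1 - i) ∈ tileOf T (i, c - 1 - i) := by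
    obtain ⟨S, S', hSS'⟩ := hT.1 _ hR
    rw [hSS', mem_product] at hiR hjR ⊢
    exact ⟨hjR.1, hiR.2⟩
  have hval := hM _ hR _ hiR _ hcorner
  rw [TPG, TPG, if_pos (by omega), if_neg (by omega)] at hval
  exact Option.some_ne_none _ hval.symm

lemma le_card_image_tileOf_doNotBuildRegion (hc : c ≤ 2 ^ k) (hT : IsTiling k T)
    (hM : Mono (TPG c) T) : c ≤ ((doNotBuildRegion k c).image (tileOf T)).card := by
  have hsub : (range c).image (fun i => (i, c - 1 - i)) ⊆ doNotBuildRegion k c := by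
    simp only [subset_iff, mem_image, mem_range, doNotBuildRegion, mem_filter, mem_Vk]
    rintro _ ⟨i, hi, rfl⟩
    omega
  calc c = ((range c).image fun i => tileOf T (i, c - 1 - i)).card :=
        (card_image_of_injOn (hT.tileOf_antidiagonal_injOn hc hM)).trans (card_range c) |>.symm
    _ = (((range c).image fun i => (i, c - 1 - i)).image (tileOf T)).card := by
        rw [image_image]
        rfl
    _ ≤ ((doNotBuildRegion k c).image (tileOf T)).card := card_le_card (image_subset_image hsub)

end IsTiling

def parBound (k c : ℕ) : ℚ :=
  ((buildRegion k c).card + (doNotBuildRegion k c).card * c : ℚ) / 2 ^ (2 * k)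

lemma parBound_eq {k c : ℕ} (hc : c ≤ 2 ^ k) :
    parBound k c = 1 + ((c : ℚ) ^ 3 - c) / 2 ^ (2 * k + 1) := by
  have hdnb : (2 * (doNotBuildRegion k c).card : ℚ) = c * (c + 1) := by
    exact_mod_cast two_mul_card_doNotBuildRegion hc
  have hsum : ((doNotBuildRegion k c).card + (buildRegion k c).card : ℚ) = 2 ^ (2 * k) := by
    exact_mod_cast card_doNotBuildRegion_add_card_buildRegion k c
  calc parBound k c
      = (2 ^ (2 * k) + (c - 1) * (doNotBuildRegion k c).card) / 2 ^ (2 * k) := by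
        rw [parBound, ← hsum]; ring
    _ = 1 + ((c : ℚ) ^ 3 - c) / 2 ^ (2 * k + 1) := by
        rw [pow_succ]
        field_simp
        linear_combination (c - 1 : ℚ) * 2 ^ (2 * k) * hdnb

lemma IsTiling.parBound_le_avgObjPAR_TPG {k c : ℕ} {T : Finset (Finset (ℕ × ℕ))}
    (hc : c ≤ 2 ^ k) (hT : IsTiling k T) (hM : Mono (TPG c) T) :
    parBound k c ≤ avgObjPAR k (TPG c) T := by
  rw [parBound, avgObjPAR, hT.sum_card_ideal_div_card_tileOf_TPG hM]
  gcongr (?_ + _ * ?_) / _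
  · rw [card_eq_sum_ones, Nat.cast_sum, Nat.cast_one]
    refine sum_le_sum fun x hx => ?_
    have hxV := (mem_filter.mp hx).1
    rw [one_le_div (by exact_mod_cast card_pos.mpr ⟨x, (hT.tileOf_mem hxV).2⟩)]
    exact_mod_cast card_le_card (hT.tileOf_subset_ideal hM hxV)
  · exact_mod_cast hT.le_card_image_tileOf_doNotBuildRegion hc hM

def optTile (k c : ℕ) (x : ℕ × ℕ) : Finset (ℕ × ℕ) :=
  if x.1 + x.2 < c then {x.1} ×ˢ range (c - x.1) else ideal k (TPG c) x

def optTiling (k c : ℕ) : Finset (Finset (ℕ × ℕ)) := (Vk k).image (optTile k c)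

section OptTiling

variable {k c : ℕ} {x y : ℕ × ℕ}

lemma mem_optTile_self (hx : x ∈ Vk k) : x ∈ optTile k c x := by
  unfold optTile
  split_ifs with h
  · exact mem_product.mpr ⟨mem_singleton_self _, mem_range.mpr (by omega)⟩
  · exact mem_ideal_self hx

lemma optTile_subset (hc : c ≤ 2 ^ k) (hx : x ∈ Vk k) : optTile k c x ⊆ Vk k := by
  unfold optTile
  split_ifs with h
  · intro y hy
    rw [mem_product, mem_singleton, mem_range] at hy
    rw [mem_Vk] at hx ⊢
    omega
  · exact filter_subset _ _

lemma TPG_eq_of_mem_optTile (hx : x ∈ optTile k c y) : TPG c x = TPG c y := by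
  unfold optTile at hx
  split_ifs at hx with h
  · rw [mem_product, mem_singleton, mem_range] at hx
    rw [TPG, TPG, if_pos h, if_pos (by omega)]
  · exact (mem_filter.mp hx).2

lemma optTile_eq_of_mem (hx : x ∈ optTile k c y) : optTile k c x = optTile k c y := by
  have hval := TPG_eq_of_mem_optTile hx
  unfold optTile at hx ⊢
  split_ifs at hx ⊢ with hy hx' hx'
  · rw [mem_product, mem_singleton] at hx
    rw [hx.1]
  · simp only [TPG, if_pos hy, if_neg hx'] at hval
    exact (Option.some_ne_none _ hval.symm).elim
  · simp only [TPG, if_neg hy, if_pos hx'] at hval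
    exact (Option.some_ne_none _ hval).elim
  · simp only [ideal, hval]

lemma isTiling_optTiling (hc : c ≤ 2 ^ k) : IsTiling k (optTiling k c) := by
  refine isTiling_image (fun x hx => ?_) (fun _ => mem_optTile_self) (fun _ => optTile_subset hc)
    fun _ _ _ => optTile_eq_of_mem
  unfold optTile
  split_ifs with h
  · exact ⟨_, _, rfl⟩
  · exact ⟨_, _, ideal_TPG_of_not_lt hx h⟩

lemma mono_optTiling : Mono (TPG c) (optTiling k c) :=
  mono_image fun _ _ _ => TPG_eq_of_mem_optTile

lemma avgObjPAR_optTiling_le_parBound (hc : c ≤ 2 ^ k) :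
    avgObjPAR k (TPG c) (optTiling k c) ≤ parBound k c := by
  have hT := isTiling_optTiling hc
  have htile : ∀ x ∈ Vk k, tileOf (optTiling k c) x = optTile k c x := fun x hx =>
    hT.tileOf_eq (mem_image_of_mem _ hx) (mem_optTile_self hx)
  rw [avgObjPAR, parBound, hT.sum_card_ideal_div_card_tileOf_TPG mono_optTiling]
  gcongr (?_ + _ * ?_) / _
  · rw [card_eq_sum_ones, Nat.cast_sum, Nat.cast_one]
    refine (sum_congr rfl fun x hx => ?_).le
    obtain ⟨hxV, hx⟩ := mem_filter.mp hx
    rw [htile x hxV, optTile, if_neg hx, div_self]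
    exact_mod_cast (card_pos.mpr ⟨x, mem_ideal_self hxV⟩).ne'
  · have : (doNotBuildRegion k c).image (tileOf (optTiling k c)) ⊆
        (range c).image fun a => {a} ×ˢ range (c - a) := by
      intro R hR
      obtain ⟨x, hx, rfl⟩ := mem_image.mp hR
      obtain ⟨hxV, hx⟩ := mem_filter.mp hx
      rw [htile x hxV, optTile, if_pos hx]
      exact mem_image_of_mem _ (mem_range.mpr (by omega))
    exact_mod_cast (card_le_card this).trans (card_image_le.trans (card_range c).le)

end OptTiling

theorem stmt7_general (k c : ℕ) (hc : c ≤ 2 ^ k - 1) :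
    IsLeast
      {a : ℚ | ∃ T : Finset (Finset (ℕ × ℕ)),
        IsTiling k T ∧ Mono (TPG c) T ∧ avgObjPAR k (TPG c) T = a}
      (1 + ((c : ℚ) ^ 3 - c) / 2 ^ (2 * k + 1)) := by
  have hck : c ≤ 2 ^ k := hc.trans (Nat.sub_le _ _)
  rw [← parBound_eq hck]
  refine ⟨⟨optTiling k c, isTiling_optTiling hck, mono_optTiling, ?_⟩, ?_⟩
  · exact (avgObjPAR_optTiling_le_parBound hck).antisymm
      ((isTiling_optTiling hck).parBound_le_avgObjPAR_TPG hck mono_optTiling)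
  · rintro _ ⟨T, hT, hM, rfl⟩
    exact hT.parBound_le_avgObjPAR_TPG hck hM

/-- the minimum over all `TPG_{k,c}`-monochromatic tilings of `V`
of the average-case objective PAR equals `1 + (c³ − c)/2^{2k+1}`. -/
theorem stmt7 (k c : ℕ) (hk : 1 ≤ k) (hc : c ≤ 2 ^ k - 1) :
    IsLeast
      {a : ℚ | ∃ T : Finset (Finset (ℕ × ℕ)),
        IsTiling k T ∧ Mono (TPG c) T ∧ avgObjPAR k (TPG c) T = a}
      (1 + ((c : ℚ) ^ 3 - c) / 2 ^ (2 * k + 1)) :=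
  stmt7_general k c hc
end

section
/- Assume c ≥ 1. In every TPG_{k,c}-monochromatic tiling of V, the c points (i, c−1−i) for i = 0,…,c−1 lie in pairwise-distinct tiles; hence every TPG_{k,c}-monochromatic tiling of V contains at least c tiles on which the value of TPG_{k,c} is 'Do Not Build'. -/
open Finset

lemma tileOf_spec (k : ℕ) (T : Finset (Finset (ℕ × ℕ))) (hT : IsTiling k T)
    (x : ℕ × ℕ) (hx : x ∈ Vk k) : tileOf T x ∈ T ∧ x ∈ tileOf T x := by
  obtain ⟨R, ⟨hRT, hxR⟩, huniq⟩ := hT.2.2.2 x hx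
  have hfil : T.filter (fun R => x ∈ R) = {R} := by
    ext Q
    simp only [Finset.mem_filter, Finset.mem_singleton]
    constructor
    · rintro ⟨hQ, hxQ⟩; exact huniq Q ⟨hQ, hxQ⟩
    · rintro rfl; exact ⟨hRT, hxR⟩
  have : tileOf T x = R := by
    unfold tileOf; rw [hfil, Finset.sup_singleton, id]
  rw [this]; exact ⟨hRT, hxR⟩

/-- for `c ≥ 1`, in every `TPG_{k,c}`-monochromatic tiling of `V`
the `c` points `(i, c−1−i)`, `i = 0,…,c−1`, lie in pairwise-distinct tiles;
hence there are at least `c` tiles on which the value is "Do Not Build". -/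
theorem stmt8 (k c : ℕ) (hk : 1 ≤ k) (hc1 : 1 ≤ c) (hc : c ≤ 2 ^ k - 1)
    (T : Finset (Finset (ℕ × ℕ))) (hT : IsTiling k T) (hM : Mono (TPG c) T) :
    (∀ i < c, ∀ j < c, ∀ R ∈ T, (i, c - 1 - i) ∈ R → (j, c - 1 - j) ∈ R → i = j) ∧
      c ≤ (T.filter fun R => ∀ x ∈ R, TPG c x = none).card := by
  have hpt_none : ∀ i < c, TPG c (i, c - 1 - i) = none := by
    intro i hi
    have : i + (c - 1 - i) = c - 1 := by omega
    simp [TPG, this]; omega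
  have hdist : ∀ i < c, ∀ j < c, ∀ R ∈ T, (i, c - 1 - i) ∈ R → (j, c - 1 - j) ∈ R → i = j := by
    intro i hi j hj R hR hiR hjR
    by_contra hne
    obtain ⟨S, S', rfl⟩ := hT.1 R hR
    simp only [Finset.mem_product] at hiR hjR
    -- the "high" corner point
    rcases Nat.lt_or_ge i j with hij | hij
    · have hmem : (j, c - 1 - i) ∈ S ×ˢ S' := by
        simp only [Finset.mem_product]; exact ⟨hjR.1, hiR.2⟩
      have := hM _ hR _ hmem _ (Finset.mk_mem_product hiR.1 hiR.2)
      rw [hpt_none i hi] at this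
      have hsum : ¬ (j + (c - 1 - i) < c) := by omega
      simp [TPG, hsum] at this
    · have hij' : j < i := by omega
      have hmem : (i, c - 1 - j) ∈ S ×ˢ S' := by
        simp only [Finset.mem_product]; exact ⟨hiR.1, hjR.2⟩
      have := hM _ hR _ hmem _ (Finset.mk_mem_product hjR.1 hjR.2)
      rw [hpt_none j hj] at this
      have hsum : ¬ (i + (c - 1 - j) < c) := by omega
      simp [TPG, hsum] at this
  refine ⟨hdist, ?_⟩
  have hVk : ∀ i < c, (i, c - 1 - i) ∈ Vk k := by
    intro i hi
    have h1 : (1:ℕ) ≤ 2 ^ k := Nat.one_le_two_pow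
    simp only [Vk, Finset.mem_product, Finset.mem_range]
    omega
  have key : ∀ i ∈ Finset.range c,
      tileOf T (i, c - 1 - i) ∈ T.filter fun R => ∀ x ∈ R, TPG c x = none := by
    intro i hi
    simp only [Finset.mem_range] at hi
    obtain ⟨hmemT, hmemx⟩ := tileOf_spec k T hT _ (hVk i hi)
    refine Finset.mem_filter.mpr ⟨hmemT, fun x hx => ?_⟩
    rw [hM _ hmemT x hx _ hmemx, hpt_none i hi]
  have inj : Set.InjOn (fun i => tileOf T (i, c - 1 - i)) (Finset.range c) := by
    intro i hi j hj hij
    simp only [Finset.coe_range, Set.mem_Iio] at hi hj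
    obtain ⟨hiT, hix⟩ := tileOf_spec k T hT _ (hVk i hi)
    obtain ⟨hjT, hjx⟩ := tileOf_spec k T hT _ (hVk j hj)
    simp only at hij
    exact hdist i hi j hj _ hiT hix (hij ▸ hjx)
  have := Finset.card_le_card_of_injOn _ key inj
  simpa using this
end
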